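/- arXiv:1405.3568 — 5 statements merged into one kernel-verified Lean document; each statement's English description precedes it below -/
import Mathlib

section
/- Let 0 < α ≤ 1 and 2/3 < β < (α+3)/4. Then for each i ∈ {1,2,3}, the integral Bᵢ = ∫_{[−π,π]³} |uᵢ|^α / |u₁u₂u₃(u₁+u₂+u₃)|^β du₁du₂du₃ is finite. -/
/-!
Off `x = 0` the integrand for `i = 0` is `|x|^(α-β) · |y|^(-β) |z|^(-β) |x+y+z|^(-β)`.
For `a, b < 1 < a + b` the substitution `z = c w` gives
`∫ |z|^(-a) |z+c|^(-b) dz = K(a,b) |c|^(1-a-b)` with `K(a,b) < ∞`, since near `0`, near `-1`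
and at infinity the integrand behaves like `|w|^(-a)`, `|w+1|^(-b)` and `|w|^(-a-b)`.
Integrating out `z` and then `y` over all of `ℝ` therefore gives
`K(β,β) K(β,2β-1) |x|^(2-3β)`, finite because `2/3 < β < 1`, and what remains is
`∫ |x|^(α+2-4β)` over `[-π, π]`, finite because `α + 2 - 4β > -1`.
The cases `i = 1, 2` reduce to `i = 0` by a cyclic permutation of the coordinates.
-/

open MeasureTheory Real Set
open scoped ENNReal

lemma integrable_abs_rpow_mul_max_abs_one_rpow {a b : ℝ} (ha : a < 1) (hab : 1 < a + b) :
    Integrable fun w : ℝ => |w| ^ (-a) * max |w| 1 ^ (-b) := by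
  have hnear : IntegrableOn (fun y : ℝ => y ^ (-a) * max y 1 ^ (-b)) (Ioc 0 1) := by
    refine (intervalIntegral.intervalIntegrable_rpow' (by linarith : -1 < -a) (a := 0) (b := 1)).1
      |>.congr_fun (fun y hy => ?_) measurableSet_Ioc
    simp [max_eq_right hy.2]
  have hfar : IntegrableOn (fun y : ℝ => y ^ (-a) * max y 1 ^ (-b)) (Ioi 1) := by
    refine (integrableOn_Ioi_rpow_of_lt (by linarith : -(a + b) < -1) one_pos).congr_fun
      (fun y (hy : 1 < y) => ?_) measurableSet_Ioi
    rw [max_eq_left hy.le, ← rpow_add (by linarith), neg_add]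
  have hIoi := hnear.union hfar
  rw [Ioc_union_Ioi_eq_Ioi zero_le_one] at hIoi
  simpa only [Real.norm_eq_abs] using (integrable_fun_norm_addHaar (volume : Measure ℝ)
    (f := fun y : ℝ => y ^ (-a) * max y 1 ^ (-b))).2 (by simpa using hIoi)

lemma rpow_neg_le_two_rpow_mul_max_one_rpow_neg {b x t : ℝ} (hb : 0 ≤ b) (h : max t 1 ≤ 2 * x) :
    x ^ (-b) ≤ 2 ^ b * max t 1 ^ (-b) := by
  have ht : 0 < max t 1 := lt_max_of_lt_right one_pos
  calc x ^ (-b) ≤ (max t 1 / 2) ^ (-b) :=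
        rpow_le_rpow_of_nonpos (by positivity) (by linarith) (by linarith)
    _ = 2 ^ b * max t 1 ^ (-b) := by
        rw [div_rpow ht.le zero_le_two, rpow_neg zero_le_two, div_inv_eq_mul, mul_comm]

lemma abs_rpow_mul_abs_add_one_rpow_le {a b : ℝ} (ha : 0 ≤ a) (hb : 0 ≤ b) (w : ℝ) :
    |w| ^ (-a) * |w + 1| ^ (-b) ≤
      2 ^ b * (|w| ^ (-a) * max |w| 1 ^ (-b)) +
        2 ^ a * (|w + 1| ^ (-b) * max |w + 1| 1 ^ (-a)) := by
  have h1 : 1 ≤ |w| + |w + 1| := by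
    linarith [abs_sub (w + 1) w, show |w + 1 - w| = 1 by simp]
  have hl : 0 ≤ 2 ^ b * (|w| ^ (-a) * max |w| 1 ^ (-b)) := by positivity
  have hr : 0 ≤ 2 ^ a * (|w + 1| ^ (-b) * max |w + 1| 1 ^ (-a)) := by positivity
  rcases le_total |w| |w + 1| with h | h
  · have := rpow_neg_le_two_rpow_mul_max_one_rpow_neg hb (max_le (by linarith) (by linarith) :
      max |w| 1 ≤ 2 * |w + 1|)
    calc |w| ^ (-a) * |w + 1| ^ (-b) ≤ |w| ^ (-a) * (2 ^ b * max |w| 1 ^ (-b)) := by gcongr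
      _ ≤ _ := by linarith
  · have := rpow_neg_le_two_rpow_mul_max_one_rpow_neg ha (max_le (by linarith) (by linarith) :
      max |w + 1| 1 ≤ 2 * |w|)
    calc |w| ^ (-a) * |w + 1| ^ (-b) ≤ (2 ^ a * max |w + 1| 1 ^ (-a)) * |w + 1| ^ (-b) := by gcongr
      _ ≤ _ := by linarith

noncomputable def powConvConst (a b : ℝ) : ℝ≥0∞ :=
  ∫⁻ w, ENNReal.ofReal (|w| ^ (-a) * |w + 1| ^ (-b))

lemma powConvConst_lt_top {a b : ℝ} (ha : a < 1) (hb : b < 1) (hab : 1 < a + b) :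
    powConvConst a b < ⊤ := by
  have hdom : Integrable fun w : ℝ => 2 ^ b * (|w| ^ (-a) * max |w| 1 ^ (-b)) +
      2 ^ a * (|w + 1| ^ (-b) * max |w + 1| 1 ^ (-a)) :=
    ((integrable_abs_rpow_mul_max_abs_one_rpow ha hab).const_mul _).add
      (((integrable_abs_rpow_mul_max_abs_one_rpow hb (by linarith)).comp_add_right 1).const_mul _)
  refine (hdom.mono' (by fun_prop) (ae_of_all _ fun w => ?_)).lintegral_lt_top
  rw [norm_of_nonneg (by positivity)]
  exact abs_rpow_mul_abs_add_one_rpow_le (by linarith) (by linarith) w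

lemma lintegral_abs_rpow_mul_abs_add_rpow_eq (a b : ℝ) {c : ℝ} (hc : c ≠ 0) :
    ∫⁻ z, ENNReal.ofReal (|z| ^ (-a) * |z + c| ^ (-b)) =
      ENNReal.ofReal (|c| ^ (1 - a - b)) * powConvConst a b := by
  have hcpos : 0 < |c| := abs_pos.2 hc
  have hscale (w : ℝ) : |c * w| ^ (-a) * |c * w + c| ^ (-b) =
      |c| ^ (-a - b) * (|w| ^ (-a) * |w + 1| ^ (-b)) := by
    rw [show c * w + c = c * (w + 1) by ring, abs_mul, abs_mul, mul_rpow hcpos.le (abs_nonneg _),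
      mul_rpow hcpos.le (abs_nonneg _), sub_eq_add_neg, rpow_add hcpos]
    ring
  have hsubst := lintegral_map_equiv (fun z => ENNReal.ofReal (|z| ^ (-a) * |z + c| ^ (-b)))
    (Homeomorph.mulLeft₀ c hc).toMeasurableEquiv (μ := volume)
  simp only [Homeomorph.toMeasurableEquiv_coe, Homeomorph.coe_mulLeft₀, Real.map_volume_mul_left hc,
    lintegral_smul_measure, hscale, ENNReal.ofReal_mul (rpow_nonneg hcpos.le _),
    lintegral_const_mul' _ _ ENNReal.ofReal_ne_top, smul_eq_mul, abs_inv] at hsubst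
  calc ∫⁻ z, ENNReal.ofReal (|z| ^ (-a) * |z + c| ^ (-b))
      = ENNReal.ofReal |c| * (ENNReal.ofReal |c|⁻¹ *
          ∫⁻ z, ENNReal.ofReal (|z| ^ (-a) * |z + c| ^ (-b))) := by
        rw [← mul_assoc, ← ENNReal.ofReal_mul hcpos.le, mul_inv_cancel₀ hcpos.ne',
          ENNReal.ofReal_one, one_mul]
    _ = ENNReal.ofReal (|c| ^ (1 - a - b)) * powConvConst a b := by
        rw [hsubst, ← mul_assoc, ← ENNReal.ofReal_mul hcpos.le,
          show 1 - a - b = 1 + (-a - b) by ring, rpow_add hcpos, rpow_one, powConvConst]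

lemma lintegral_lintegral_abs_rpow_mul_eq (a b c : ℝ) {x : ℝ} (hx : x ≠ 0) :
    ∫⁻ y, ∫⁻ z, ENNReal.ofReal (|y| ^ (-a) * (|z| ^ (-b) * |x + y + z| ^ (-c))) =
      ENNReal.ofReal (|x| ^ (2 - a - b - c)) * (powConvConst b c * powConvConst a (b + c - 1)) := by
  have hinner : ∀ᵐ y : ℝ, ∫⁻ z, ENNReal.ofReal (|y| ^ (-a) * (|z| ^ (-b) * |x + y + z| ^ (-c))) =
      ENNReal.ofReal (|y| ^ (-a) * |y + x| ^ (-(b + c - 1))) * powConvConst b c := by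
    filter_upwards [Measure.ae_ne volume (-x)] with y hy
    have hxy : x + y ≠ 0 := fun h => hy (by linarith)
    simp_rw [ENNReal.ofReal_mul (rpow_nonneg (abs_nonneg y) _), add_comm y x,
      show ∀ z, x + y + z = z + (x + y) from fun z => by ring]
    rw [lintegral_const_mul' _ _ ENNReal.ofReal_ne_top,
      lintegral_abs_rpow_mul_abs_add_rpow_eq b c hxy, ← mul_assoc,
      show 1 - b - c = -(b + c - 1) by ring]
  rw [lintegral_congr_ae hinner, lintegral_mul_const _ (by fun_prop),
    lintegral_abs_rpow_mul_abs_add_rpow_eq a _ hx, show 1 - a - (b + c - 1) = 2 - a - b - c by ring]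
  ring

lemma abs_rpow_div_abs_mul_rpow_eq (α β : ℝ) {x : ℝ} (hx : x ≠ 0) (y z : ℝ) :
    |x| ^ α / |x * y * z * (x + y + z)| ^ β =
      |x| ^ (α - β) * (|y| ^ (-β) * (|z| ^ (-β) * |x + y + z| ^ (-β))) := by
  rw [abs_mul, abs_mul, abs_mul, mul_rpow (by positivity) (abs_nonneg _),
    mul_rpow (by positivity) (abs_nonneg _), mul_rpow (abs_nonneg _) (abs_nonneg _),
    rpow_sub (abs_pos.2 hx), rpow_neg (abs_nonneg y), rpow_neg (abs_nonneg z),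
    rpow_neg (abs_nonneg _)]
  simp only [div_eq_mul_inv, mul_inv]
  ring

lemma setLIntegral_abs_rpow_lt_top {r : ℝ} (hr : -1 < r) {s : Set ℝ} (hs : Bornology.IsBounded s) :
    ∫⁻ x in s, ENNReal.ofReal (|x| ^ r) < ⊤ := by
  have hloc : LocallyIntegrable (fun x : ℝ => |x| ^ r) :=
    locallyIntegrable_of_norm_le_rpow (C := 1) (α := -r) (by simp)
      (by rw [Module.finrank_self]; push_cast; linarith)
      (ae_of_all _ fun x => by simp [abs_rpow_of_nonneg (abs_nonneg x)])
      (measurable_abs.pow_const r).aestronglyMeasurable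
  exact ((hloc.integrableOn_isCompact hs.isCompact_closure).mono_set subset_closure)
    |>.lintegral_lt_top

lemma setLIntegral_kernel_cube_lt_top {α β : ℝ} (hβ : 2 / 3 < β) (hβ1 : β < 1)
    (hαβ : -1 < α + 2 - 4 * β) {s : Set ℝ} (hs : Bornology.IsBounded s) :
    ∫⁻ u in s ×ˢ s ×ˢ s,
      ENNReal.ofReal (|u.1| ^ α / |u.1 * u.2.1 * u.2.2 * (u.1 + u.2.1 + u.2.2)| ^ β) < ⊤ := by
  set K := powConvConst β β * powConvConst β (β + β - 1)
  have hK : K < ⊤ := ENNReal.mul_lt_top (powConvConst_lt_top hβ1 hβ1 (by linarith))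
    (powConvConst_lt_top hβ1 (by linarith) (by linarith))
  have hslice : ∀ᵐ x : ℝ, ∫⁻ p : ℝ × ℝ,
      ENNReal.ofReal (|x| ^ α / |x * p.1 * p.2 * (x + p.1 + p.2)| ^ β) =
        ENNReal.ofReal (|x| ^ (α + 2 - 4 * β)) * K := by
    filter_upwards [Measure.ae_ne volume 0] with x hx
    simp_rw [abs_rpow_div_abs_mul_rpow_eq α β hx, ENNReal.ofReal_mul (rpow_nonneg (abs_nonneg x) _)]
    rw [lintegral_const_mul' _ _ ENNReal.ofReal_ne_top, Measure.volume_eq_prod,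
      lintegral_prod _ (by fun_prop), lintegral_lintegral_abs_rpow_mul_eq β β β hx, ← mul_assoc,
      ← ENNReal.ofReal_mul (rpow_nonneg (abs_nonneg x) _), ← rpow_add (abs_pos.2 hx)]
    congr 3
    ring
  calc ∫⁻ u in s ×ˢ s ×ˢ s,
        ENNReal.ofReal (|u.1| ^ α / |u.1 * u.2.1 * u.2.2 * (u.1 + u.2.1 + u.2.2)| ^ β)
      = ∫⁻ x in s, ∫⁻ p in s ×ˢ s,
          ENNReal.ofReal (|x| ^ α / |x * p.1 * p.2 * (x + p.1 + p.2)| ^ β) :=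
        setLIntegral_prod _ (by fun_prop)
    _ ≤ ∫⁻ x in s, ∫⁻ p : ℝ × ℝ,
          ENNReal.ofReal (|x| ^ α / |x * p.1 * p.2 * (x + p.1 + p.2)| ^ β) :=
        lintegral_mono fun x => setLIntegral_le_lintegral _ _
    _ = (∫⁻ x in s, ENNReal.ofReal (|x| ^ (α + 2 - 4 * β))) * K := by
        rw [lintegral_congr_ae (ae_restrict_of_ae hslice), lintegral_mul_const' _ _ hK.ne]
    _ < ⊤ := ENNReal.mul_lt_top (setLIntegral_abs_rpow_lt_top hαβ hs) hK

lemma setLIntegral_cube_comp_rotate {X : Type*} [MeasureSpace X] [SFinite (volume : Measure X)]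
    (s : Set X) (F : X × X × X → ℝ≥0∞) :
    ∫⁻ u in s ×ˢ s ×ˢ s, F (u.2.1, u.2.2, u.1) = ∫⁻ u in s ×ˢ s ×ˢ s, F u := by
  let e : X × X × X ≃ᵐ X × X × X := MeasurableEquiv.prodComm.trans MeasurableEquiv.prodAssoc
  have he_apply (u : X × X × X) : e u = (u.2.1, u.2.2, u.1) := rfl
  have he : MeasurePreserving e := by
    simp only [Measure.volume_eq_prod]
    exact (measurePreserving_prodAssoc _ _ _).comp Measure.measurePreserving_swap
  have hs : e ⁻¹' (s ×ˢ s ×ˢ s) = s ×ˢ s ×ˢ s := by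
    ext u
    simp only [mem_preimage, he_apply, mem_prod]
    tauto
  simpa only [hs, he_apply] using
    he.setLIntegral_comp_preimage_emb e.measurableEmbedding F (s ×ˢ s ×ˢ s)

theorem kernel_integral_finite_general
    (α β : ℝ) (hα1 : α ≤ 1) (hβl : 2 / 3 < β) (hβu : β < (α + 3) / 4)
    (i : Fin 3) :
    (∫⁻ u in (Set.Icc (-Real.pi) Real.pi ×ˢ Set.Icc (-Real.pi) Real.pi ×ˢ
        Set.Icc (-Real.pi) Real.pi : Set (ℝ × ℝ × ℝ)),
      ENNReal.ofReal (|![u.1, u.2.1, u.2.2] i| ^ α /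
        |u.1 * u.2.1 * u.2.2 * (u.1 + u.2.1 + u.2.2)| ^ β)) < ⊤ := by
  set F : ℝ × ℝ × ℝ → ℝ≥0∞ := fun u =>
    ENNReal.ofReal (|u.1| ^ α / |u.1 * u.2.1 * u.2.2 * (u.1 + u.2.1 + u.2.2)| ^ β)
  have hcube : ∫⁻ u in Icc (-π) π ×ˢ Icc (-π) π ×ˢ Icc (-π) π, F u < ⊤ :=
    setLIntegral_kernel_cube_lt_top hβl (by linarith) (by linarith) (Metric.isBounded_Icc (-π) π)
  fin_cases i
  · exact hcube
  · rw [← setLIntegral_cube_comp_rotate] at hcube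
    convert hcube using 6 with u
    · rfl
    · congr 1; ring
  · rw [← setLIntegral_cube_comp_rotate, ← setLIntegral_cube_comp_rotate] at hcube
    convert hcube using 6 with u
    · rfl
    · congr 1; ring

theorem kernel_integral_finite
    (α β : ℝ) (hα0 : 0 < α) (hα1 : α ≤ 1) (hβl : 2 / 3 < β) (hβu : β < (α + 3) / 4)
    (i : Fin 3) :
    (∫⁻ u in (Set.Icc (-Real.pi) Real.pi ×ˢ Set.Icc (-Real.pi) Real.pi ×ˢ
        Set.Icc (-Real.pi) Real.pi : Set (ℝ × ℝ × ℝ)),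
      ENNReal.ofReal (|![u.1, u.2.1, u.2.2] i| ^ α /
        |u.1 * u.2.1 * u.2.2 * (u.1 + u.2.1 + u.2.2)| ^ β)) < ⊤ :=
  kernel_integral_finite_general α β hα1 hβl hβu i
end

section
/- Let p > 1 and 0 < α < 1 with αp < 1, and let f be a 2π-periodic real-valued function that is differentiable at every λ ∈ [−π,π]\{0} and satisfies, for some constants M₁, M₂ > 0, |f(λ)| ≤ M₁|λ|^{−α} and |f′(λ)| ≤ M₂|λ|^{−(α+1)} for all λ ∈ [−π,π]\{0}. Then f ∈ Lip(p, 1/p − α); that is, there is a constant C such that ω_p(f,δ) ≤ C·δ^{1/p−α} for all δ > 0. -/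
open MeasureTheory Real
open scoped ENNReal

/-- The `L^p` modulus of continuity
`ω_p(ψ,δ) = sup_{0 < h ≤ δ} ‖ψ(·+h) - ψ(·)‖_{L^p(-π,π)}`. -/
noncomputable def modulusLp (p : ℝ≥0∞) (ψ : ℝ → ℝ) (δ : ℝ) : ℝ≥0∞ :=
  ⨆ h ∈ Set.Ioc (0 : ℝ) δ,
    eLpNorm (fun x => ψ (x + h) - ψ x) p (volume.restrict (Set.Ioc (-Real.pi) Real.pi))

/-- `ψ ∈ Lip(p,γ)`: `ψ ∈ L^p(-π,π)` and `ω_p(ψ,δ) ≤ C δ^γ` for all `δ > 0`. -/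
def MemLip (p : ℝ≥0∞) (γ : ℝ) (ψ : ℝ → ℝ) : Prop :=
  MemLp ψ p (volume.restrict (Set.Ioc (-Real.pi) Real.pi)) ∧
  ∃ C : ℝ, ∀ δ : ℝ, 0 < δ → modulusLp p ψ δ ≤ ENNReal.ofReal (C * δ ^ γ)

open Set

/-!
Split `∫_{(-π,π]} |f(x+h) - f(x)|^p` at `|x| = 2h`. Near the singularity, both `f(x+h)` and
`f(x)` are bounded by `M₁|y|^{-α}` on `|y| ≤ 3h`, which contributes `O(h^{1-αp})`. Away from it,
the mean value theorem gives `|f(x+h) - f(x)| ≤ 2^{α+1} M₂ h |x|^{-(α+1)}`, and the `p`-th power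
of this integrates over `|x| > 2h` to `O(h^p · h^{1-(α+1)p}) = O(h^{1-αp})`. Measuring the
distance to the singularity in `AddCircle (2π)` keeps the derivative bound valid when `x + h`
leaves `[-π, π]`. For large `h`, periodicity gives the translates of `f` the same `L^p` norm as
`f`, so the increments stay bounded.
-/

theorem lintegral_comp_abs (F : ℝ → ℝ≥0∞) : ∫⁻ x, F |x| = 2 * ∫⁻ x in Ioi 0, F x := by
  have hIoi : ∫⁻ x in Ioi 0, F |x| = ∫⁻ x in Ioi 0, F x :=
    setLIntegral_congr_fun measurableSet_Ioi fun x hx => by rw [abs_of_pos hx]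
  have hIic : ∫⁻ x in Iic 0, F |x| = ∫⁻ x in Ioi 0, F x := by
    have := (Measure.measurePreserving_neg (volume : Measure ℝ)).setLIntegral_comp_preimage_emb
      measurableEmbedding_neg (fun x => F |x|) (Ici 0)
    simp only [neg_preimage, neg_Ici, neg_zero, abs_neg] at this
    rw [this, setLIntegral_congr Ioi_ae_eq_Ici.symm, hIoi]
  rw [← lintegral_add_compl _ (measurableSet_Iic (a := (0 : ℝ))), compl_Iic, hIic, hIoi, two_mul]

theorem setLIntegral_abs_preimage (F : ℝ → ℝ≥0∞) {A : Set ℝ} (hA : MeasurableSet A) :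
    ∫⁻ x in abs ⁻¹' A, F |x| = 2 * ∫⁻ x in A ∩ Ioi 0, F x := by
  rw [← setLIntegral_indicator hA, ← lintegral_comp_abs,
    ← lintegral_indicator (hA.preimage measurable_abs)]
  rfl

theorem setLIntegral_abs_rpow_of_abs_le {s b : ℝ} (hs : -1 < s) (hb : 0 ≤ b) :
    ∫⁻ x in {x | |x| ≤ b}, ENNReal.ofReal (|x| ^ s) =
      ENNReal.ofReal (2 * (b ^ (s + 1) / (s + 1))) := by
  change ∫⁻ x in abs ⁻¹' Iic b, ENNReal.ofReal (|x| ^ s) = _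
  rw [setLIntegral_abs_preimage (fun x => ENNReal.ofReal (x ^ s)) measurableSet_Iic, Iic_inter_Ioi,
    ← ofReal_integral_eq_lintegral_ofReal, ← intervalIntegral.integral_of_le hb,
    integral_rpow (Or.inl hs), zero_rpow (by linarith), sub_zero, ENNReal.ofReal_mul zero_le_two,
    ENNReal.ofReal_ofNat]
  · exact (intervalIntegral.intervalIntegrable_rpow' hs).1
  · filter_upwards [ae_restrict_mem measurableSet_Ioc] with x hx using rpow_nonneg hx.1.le s

theorem setLIntegral_abs_rpow_of_lt_abs {s a : ℝ} (hs : s < -1) (ha : 0 < a) :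
    ∫⁻ x in {x | a < |x|}, ENNReal.ofReal (|x| ^ s) =
      ENNReal.ofReal (2 * (-a ^ (s + 1) / (s + 1))) := by
  change ∫⁻ x in abs ⁻¹' Ioi a, ENNReal.ofReal (|x| ^ s) = _
  rw [setLIntegral_abs_preimage (fun x => ENNReal.ofReal (x ^ s)) measurableSet_Ioi,
    Ioi_inter_Ioi, max_eq_left ha.le,
    ← ofReal_integral_eq_lintegral_ofReal (integrableOn_Ioi_rpow_of_lt hs ha),
    integral_Ioi_rpow_of_lt hs ha, ENNReal.ofReal_mul zero_le_two, ENNReal.ofReal_ofNat]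
  filter_upwards [ae_restrict_mem measurableSet_Ioi] with x hx using rpow_nonneg (ha.trans hx).le s

theorem setLIntegral_enorm_rpow_le_of_abs_le {g : ℝ → ℝ} {s : Set ℝ} {c r p : ℝ}
    (hs : MeasurableSet s) (hc : 0 ≤ c) (hp : 0 ≤ p)
    (hg : ∀ x ∈ s, x ≠ 0 → |g x| ≤ c * |x| ^ r) :
    ∫⁻ x in s, ‖g x‖ₑ ^ p ≤ ENNReal.ofReal (c ^ p) * ∫⁻ x in s, ENNReal.ofReal (|x| ^ (r * p)) := by
  rw [← lintegral_const_mul' _ _ ENNReal.ofReal_ne_top]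
  refine lintegral_mono_ae ?_
  filter_upwards [ae_restrict_mem hs, ae_restrict_of_ae (Measure.ae_ne volume 0)] with x hxs hx0
  rw [Real.enorm_eq_ofReal_abs, ENNReal.ofReal_rpow_of_nonneg (abs_nonneg _) hp,
    ← ENNReal.ofReal_mul (rpow_nonneg hc p), rpow_mul (abs_nonneg x),
    ← mul_rpow hc (rpow_nonneg (abs_nonneg x) r)]
  gcongr
  exact hg x hxs hx0

theorem eLpNorm_ofReal_le_of_lintegral_le {α E : Type*} [MeasurableSpace α] [NormedAddCommGroup E]
    {μ : Measure α} {g : α → E} {p c : ℝ} (hp : 0 < p) (hc : 0 ≤ c)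
    (hg : ∫⁻ x, ‖g x‖ₑ ^ p ∂μ ≤ ENNReal.ofReal c) :
    eLpNorm g (ENNReal.ofReal p) μ ≤ ENNReal.ofReal (c ^ (1 / p)) := by
  rw [eLpNorm_eq_lintegral_rpow_enorm_toReal (by simpa using hp) ENNReal.ofReal_ne_top,
    ENNReal.toReal_ofReal hp.le, ← ENNReal.ofReal_rpow_of_nonneg hc (by positivity)]
  gcongr

theorem lintegral_enorm_sub_rpow_le {α E : Type*} [MeasurableSpace α] [NormedAddCommGroup E]
    {μ : Measure α} {u v : α → E} {p : ℝ} {J : ℝ≥0∞} (hp : 1 ≤ p)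
    (hmeas : AEStronglyMeasurable v μ) (hu : ∫⁻ x, ‖u x‖ₑ ^ p ∂μ ≤ J)
    (hv : ∫⁻ x, ‖v x‖ₑ ^ p ∂μ ≤ J) :
    ∫⁻ x, ‖u x - v x‖ₑ ^ p ∂μ ≤ 2 ^ p * J := by
  calc ∫⁻ x, ‖u x - v x‖ₑ ^ p ∂μ ≤ ∫⁻ x, 2 ^ (p - 1) * (‖u x‖ₑ ^ p + ‖v x‖ₑ ^ p) ∂μ := by
        refine lintegral_mono fun x => ?_
        calc ‖u x - v x‖ₑ ^ p ≤ (‖u x‖ₑ + ‖v x‖ₑ) ^ p := by gcongr; exact enorm_sub_le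
          _ ≤ _ := ENNReal.rpow_add_le_mul_rpow_add_rpow _ _ hp
    _ = 2 ^ (p - 1) * (∫⁻ x, ‖u x‖ₑ ^ p ∂μ + ∫⁻ x, ‖v x‖ₑ ^ p ∂μ) := by
        rw [lintegral_const_mul' _ _ (by simp), lintegral_add_right' _ (hmeas.enorm.pow_const p)]
    _ ≤ 2 ^ (p - 1) * (J + J) := by gcongr
    _ = 2 ^ p * J := by
        rw [← two_mul, ← mul_assoc]
        nth_rw 2 [← ENNReal.rpow_one 2]
        rw [← ENNReal.rpow_add _ _ two_ne_zero ENNReal.ofNat_ne_top, sub_add_cancel]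

theorem setLIntegral_comp_add_right_preimage (F : ℝ → ℝ≥0∞) (h : ℝ) (t : Set ℝ) :
    ∫⁻ x in (· + h) ⁻¹' t, F (x + h) = ∫⁻ x in t, F x :=
  (measurePreserving_add_right volume h).setLIntegral_comp_preimage_emb
    (measurableEmbedding_addRight h) F t

theorem setLIntegral_abs_le_enorm_sub_rpow_le {E : Type*} [NormedAddCommGroup E] {f : ℝ → E}
    {p h : ℝ} (hp : 1 ≤ p) (hh : 0 ≤ h)
    (hf : AEStronglyMeasurable f (volume.restrict {x | |x| ≤ 2 * h})) :
    ∫⁻ x in {x | |x| ≤ 2 * h}, ‖f (x + h) - f x‖ₑ ^ p ≤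
      2 ^ p * ∫⁻ x in {x | |x| ≤ 3 * h}, ‖f x‖ₑ ^ p := by
  refine lintegral_enorm_sub_rpow_le hp hf ?_ ?_
  · calc ∫⁻ x in {x | |x| ≤ 2 * h}, ‖f (x + h)‖ₑ ^ p
        ≤ ∫⁻ x in (· + h) ⁻¹' {x | |x| ≤ 3 * h}, ‖f (x + h)‖ₑ ^ p := by
          refine lintegral_mono_set fun x (hx : |x| ≤ 2 * h) => ?_
          show |x + h| ≤ 3 * h
          linarith [abs_add_le x h, abs_of_nonneg hh]
      _ = _ := setLIntegral_comp_add_right_preimage (fun y => ‖f y‖ₑ ^ p) h _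
  · exact lintegral_mono_set fun x (hx : |x| ≤ 2 * h) => show |x| ≤ 3 * h by linarith

theorem Function.Periodic.setLIntegral_Ioc_comp_add {g : ℝ → ℝ≥0∞} {T : ℝ}
    (hg : Function.Periodic g T) (hT : 0 < T) (t h : ℝ) :
    ∫⁻ x in Ioc t (t + T), g (x + h) = ∫⁻ x in Ioc t (t + T), g x := by
  have : Fact (0 < T) := ⟨hT⟩
  calc ∫⁻ x in Ioc t (t + T), g (x + h) = ∫⁻ x in Ioc (t + h) (t + h + T), g x := by
        simpa [preimage_add_const_Ioc, add_right_comm] using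
          setLIntegral_comp_add_right_preimage g h (Ioc (t + h) (t + h + T))
    _ = ∫⁻ y : AddCircle T, hg.lift y := by
        simpa using AddCircle.lintegral_preimage T (t + h) hg.lift
    _ = ∫⁻ x in Ioc t (t + T), g x := by
        simpa using (AddCircle.lintegral_preimage T t hg.lift).symm

theorem Function.Periodic.setLIntegral_Ioc_enorm_sub_rpow_le {E : Type*} [NormedAddCommGroup E]
    {f : ℝ → E} {T p : ℝ} (hf : Function.Periodic f T) (hT : 0 < T) (hp : 1 ≤ p) {t : ℝ}
    (hmeas : AEStronglyMeasurable f (volume.restrict (Ioc t (t + T)))) (h : ℝ) :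
    ∫⁻ x in Ioc t (t + T), ‖f (x + h) - f x‖ₑ ^ p ≤ 2 ^ p * ∫⁻ x in Ioc t (t + T), ‖f x‖ₑ ^ p := by
  refine lintegral_enorm_sub_rpow_le hp hmeas ?_ le_rfl
  have hg : Function.Periodic (fun x => ‖f x‖ₑ ^ p) T := fun x => by simp only [hf x]
  exact (hg.setLIntegral_Ioc_comp_add hT t h).le

theorem aestronglyMeasurable_restrict_of_continuousOn_diff_singleton {f : ℝ → ℝ} {s : Set ℝ}
    {a : ℝ} (hs : MeasurableSet s) (hf : ContinuousOn f (s \ {a})) :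
    AEStronglyMeasurable f (volume.restrict s) := by
  rw [← Measure.restrict_congr_set (sdiff_null_ae_eq_self (measure_singleton a))]
  exact hf.aestronglyMeasurable (hs.diff (measurableSet_singleton a))

theorem AddCircle.norm_coe_le_abs (T x : ℝ) : ‖(x : AddCircle T)‖ ≤ |x| :=
  QuotientAddGroup.norm_mk_le_norm

theorem Function.Periodic.exists_add_mem_Icc_abs_eq_norm {β : Type*} {f : ℝ → β} {a : ℝ}
    (hf : Function.Periodic f (2 * a)) (ha : 0 < a) (x : ℝ) :
    ∃ c, x + c ∈ Icc (-a) a ∧ |x + c| = ‖(x : AddCircle (2 * a))‖ ∧ ∀ z, f (z + c) = f z := by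
  refine ⟨-(round ((2 * a)⁻¹ * x) * (2 * a)), ?_, ?_, fun z => ?_⟩
  · rw [mem_Icc, ← abs_le, ← sub_eq_add_neg, ← AddCircle.norm_eq]
    simpa [abs_of_pos ha] using
      AddCircle.norm_le_half_period (2 * a) (x := (x : AddCircle (2 * a))) (by positivity)
  · rw [← sub_eq_add_neg, AddCircle.norm_eq]
  · rw [← sub_eq_add_neg]
    exact (hf.int_mul _).sub_eq z

section Periodic

variable {f : ℝ → ℝ} {a : ℝ}

theorem Function.Periodic.differentiableAt_of_forall_Icc (hf : Function.Periodic f (2 * a))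
    (ha : 0 < a) (hdiff : ∀ x ∈ Icc (-a) a, x ≠ 0 → DifferentiableAt ℝ f x) {x : ℝ}
    (hx : (x : AddCircle (2 * a)) ≠ 0) : DifferentiableAt ℝ f x := by
  obtain ⟨c, hmem, habs, hc⟩ := hf.exists_add_mem_Icc_abs_eq_norm ha x
  have hne : x + c ≠ 0 := abs_pos.1 (habs ▸ norm_pos_iff.2 hx)
  rw [← funext hc, differentiableAt_comp_add_const]
  exact hdiff _ hmem hne

theorem Function.Periodic.abs_deriv_le_of_forall_Icc (hf : Function.Periodic f (2 * a))
    (ha : 0 < a) {g : ℝ → ℝ} (hd : ∀ x ∈ Icc (-a) a, x ≠ 0 → |deriv f x| ≤ g |x|) {x : ℝ}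
    (hx : (x : AddCircle (2 * a)) ≠ 0) : |deriv f x| ≤ g ‖(x : AddCircle (2 * a))‖ := by
  obtain ⟨c, hmem, habs, hc⟩ := hf.exists_add_mem_Icc_abs_eq_norm ha x
  have hne : x + c ≠ 0 := abs_pos.1 (habs ▸ norm_pos_iff.2 hx)
  rw [← funext hc, deriv_comp_add_const, ← habs]
  exact hd _ hmem hne

end Periodic

theorem abs_sub_le_of_abs_deriv_le_norm_rpow {f : ℝ → ℝ} {T M β : ℝ} (hM : 0 ≤ M) (hβ : 0 ≤ β)
    (hdiff : ∀ t : ℝ, (t : AddCircle T) ≠ 0 → DifferentiableAt ℝ f t)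
    (hd : ∀ t : ℝ, (t : AddCircle T) ≠ 0 → |deriv f t| ≤ M * ‖(t : AddCircle T)‖ ^ (-β))
    {x h : ℝ} (hh : 0 ≤ h) (hx : 2 * h < ‖(x : AddCircle T)‖) :
    |f (x + h) - f x| ≤ M * 2 ^ β * ‖(x : AddCircle T)‖ ^ (-β) * h := by
  set d := ‖(x : AddCircle T)‖
  have hnorm : ∀ t ∈ Icc x (x + h), d / 2 ≤ ‖(t : AddCircle T)‖ := by
    intro t ht
    have := norm_sub_norm_le (x : AddCircle T) (t : AddCircle T)
    rw [← AddCircle.coe_sub] at this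
    have := AddCircle.norm_coe_le_abs T (x - t)
    rw [abs_of_nonpos (by linarith [ht.1])] at this
    linarith [ht.2]
  have hpos : ∀ t ∈ Icc x (x + h), (t : AddCircle T) ≠ 0 := fun t ht h0 => by
    have := hnorm t ht
    rw [h0, norm_zero] at this
    linarith
  have hbound : ∀ t ∈ Icc x (x + h), ‖deriv f t‖ ≤ M * 2 ^ β * d ^ (-β) := by
    intro t ht
    calc ‖deriv f t‖ ≤ M * ‖(t : AddCircle T)‖ ^ (-β) := hd t (hpos t ht)
      _ ≤ M * (d / 2) ^ (-β) := mul_le_mul_of_nonneg_left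
          (rpow_le_rpow_of_nonpos (by linarith) (hnorm t ht) (neg_nonpos.2 hβ)) hM
      _ = M * 2 ^ β * d ^ (-β) := by
          rw [div_rpow (by linarith) zero_le_two, rpow_neg zero_le_two, div_inv_eq_mul]; ring
  have := (convex_Icc x (x + h)).norm_image_sub_le_of_norm_deriv_le
    (fun t ht => hdiff t (hpos t ht)) hbound (left_mem_Icc.2 (by linarith))
    (right_mem_Icc.2 (by linarith))
  simpa [Real.norm_eq_abs, abs_of_nonneg hh] using this

theorem setLIntegral_enorm_sub_rpow_le_of_abs_deriv_le {f : ℝ → ℝ} {a M β p h : ℝ} (ha : 0 < a)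
    (hM : 0 ≤ M) (hβ : 0 ≤ β) (hp : 0 < p) (hβp : 1 < β * p) (hh : 0 < h)
    (hdiff : ∀ t : ℝ, (t : AddCircle (2 * a)) ≠ 0 → DifferentiableAt ℝ f t)
    (hd : ∀ t : ℝ, (t : AddCircle (2 * a)) ≠ 0 →
      |deriv f t| ≤ M * ‖(t : AddCircle (2 * a))‖ ^ (-β)) :
    ∫⁻ x in Icc (-a) a ∩ {x | 2 * h < |x|}, ‖f (x + h) - f x‖ₑ ^ p ≤
      ENNReal.ofReal ((M * 2 ^ β * h) ^ p) *
        ENNReal.ofReal (2 * (-(2 * h) ^ (-β * p + 1) / (-β * p + 1))) := by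
  have hnorm : ∀ x ∈ Icc (-a) a, ‖(x : AddCircle (2 * a))‖ = |x| := fun x hx =>
    (AddCircle.norm_coe_eq_abs_iff _ (by positivity)).2
      (by rw [abs_of_pos (by positivity : 0 < 2 * a)]; simpa [abs_le] using hx)
  refine (setLIntegral_enorm_rpow_le_of_abs_le (c := M * 2 ^ β * h) (r := -β)
    (measurableSet_Icc.inter (measurableSet_lt measurable_const measurable_abs)) (by positivity)
    hp.le ?_).trans ?_
  · rintro x ⟨hxa, hxh⟩ -
    have := abs_sub_le_of_abs_deriv_le_norm_rpow hM hβ hdiff hd hh.le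
      (show 2 * h < ‖(x : AddCircle (2 * a))‖ by rw [hnorm x hxa]; exact hxh)
    rw [hnorm x hxa] at this
    linarith [mul_right_comm (M * 2 ^ β) (|x| ^ (-β)) h]
  · gcongr
    refine (lintegral_mono_set inter_subset_right).trans_eq ?_
    rw [setLIntegral_abs_rpow_of_lt_abs (by nlinarith) (by positivity), neg_mul]

section PowerBounds

variable {p α M₁ M₂ : ℝ} {f : ℝ → ℝ}

theorem setLIntegral_abs_le_enorm_rpow_le (hp : 0 < p) (hαp : α * p < 1) (hM₁ : 0 ≤ M₁) {b : ℝ}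
    (hb : 0 ≤ b) (hf : ∀ x, |x| ≤ b → x ≠ 0 → |f x| ≤ M₁ * |x| ^ (-α)) :
    ∫⁻ x in {x | |x| ≤ b}, ‖f x‖ₑ ^ p ≤
      ENNReal.ofReal (M₁ ^ p * (2 * (b ^ (1 - α * p) / (1 - α * p)))) := by
  refine (setLIntegral_enorm_rpow_le_of_abs_le (measurableSet_le measurable_abs measurable_const)
    hM₁ hp.le hf).trans_eq ?_
  rw [setLIntegral_abs_rpow_of_abs_le (by linarith) hb, ← ENNReal.ofReal_mul (rpow_nonneg hM₁ p),
    neg_mul, neg_add_eq_sub]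

theorem exists_setLIntegral_Ioc_enorm_sub_rpow_le {a : ℝ} (ha : 0 < a) (hp : 1 ≤ p) (hα : 0 < α)
    (hαp : α * p < 1) (hM₁ : 0 ≤ M₁) (hM₂ : 0 ≤ M₂)
    (hmeas : AEStronglyMeasurable f (volume.restrict (Icc (-a) a)))
    (hb : ∀ x, |x| ≤ a → x ≠ 0 → |f x| ≤ M₁ * |x| ^ (-α))
    (hdiff : ∀ t : ℝ, (t : AddCircle (2 * a)) ≠ 0 → DifferentiableAt ℝ f t)
    (hd : ∀ t : ℝ, (t : AddCircle (2 * a)) ≠ 0 →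
      |deriv f t| ≤ M₂ * ‖(t : AddCircle (2 * a))‖ ^ (-(α + 1))) :
    ∃ C, 0 ≤ C ∧ ∀ h, 0 < h → h ≤ a / 3 →
      ∫⁻ x in Ioc (-a) a, ‖f (x + h) - f x‖ₑ ^ p ≤ ENNReal.ofReal (C * h ^ (1 - α * p)) := by
  obtain ⟨q, hq_def⟩ : ∃ q, q = -(α + 1) * p + 1 := ⟨_, rfl⟩
  have he : 0 < 1 - α * p := by linarith
  have hq : q < 0 := by nlinarith
  have hneg : ∀ y : ℝ, 0 ≤ y → 0 ≤ -y ^ q / q := fun y hy =>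
    div_nonneg_of_nonpos (neg_nonpos.2 (rpow_nonneg hy q)) hq.le
  have h2q := hneg 2 zero_le_two
  refine ⟨2 ^ p * (M₁ ^ p * (2 * (3 ^ (1 - α * p) / (1 - α * p)))) +
    (M₂ * 2 ^ (α + 1)) ^ p * (2 * (-2 ^ q / q)), by positivity, fun h hh hha => ?_⟩
  have hcover : Ioc (-a) a ⊆ {x | |x| ≤ 2 * h} ∪ Icc (-a) a ∩ {x | 2 * h < |x|} := fun x hx =>
    (le_or_gt |x| (2 * h)).imp id fun hx' => ⟨Ioc_subset_Icc_self hx, hx'⟩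
  have hsub : {x | |x| ≤ 2 * h} ⊆ Icc (-a) a := fun x (hx : |x| ≤ 2 * h) => abs_le.1 (by linarith)
  have hnear := (setLIntegral_abs_le_enorm_sub_rpow_le hp hh.le
    (hmeas.mono_measure (Measure.restrict_mono hsub le_rfl))).trans
    (mul_le_mul_right (setLIntegral_abs_le_enorm_rpow_le (by linarith) hαp hM₁ (by positivity)
      fun x hx => hb x (by linarith)) _)
  have hfar := setLIntegral_enorm_sub_rpow_le_of_abs_deriv_le (p := p) ha hM₂ (by linarith)
    (by linarith) (by nlinarith) hh hdiff hd
  rw [← hq_def] at hfar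
  have h2hq := hneg (2 * h) (by positivity)
  refine (lintegral_mono_set hcover).trans <| (lintegral_union_le _ _ _).trans <|
    (add_le_add hnear hfar).trans_eq ?_
  rw [← ENNReal.ofReal_ofNat 2, ENNReal.ofReal_rpow_of_nonneg zero_le_two (by linarith),
    ← ENNReal.ofReal_mul (by positivity), ← ENNReal.ofReal_mul (by positivity),
    ← ENNReal.ofReal_add (by positivity) (by positivity), mul_rpow zero_le_three hh.le,
    mul_rpow (by positivity) hh.le, mul_rpow zero_le_two hh.le,
    show 1 - α * p = p + q by rw [hq_def]; ring, rpow_add hh p q]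
  congr 1
  ring

end PowerBounds

theorem exists_modulusLp_le_of_lintegral_le {ψ : ℝ → ℝ} {p γ h₀ B C : ℝ} (hp : 0 < p)
    (hγ : 0 ≤ γ) (hh₀ : 0 < h₀) (hB : 0 ≤ B) (hC : 0 ≤ C)
    (hsmall : ∀ h, 0 < h → h ≤ h₀ →
      ∫⁻ x in Ioc (-π) π, ‖ψ (x + h) - ψ x‖ₑ ^ p ≤ ENNReal.ofReal (C * h ^ (γ * p)))
    (hlarge : ∀ h, ∫⁻ x in Ioc (-π) π, ‖ψ (x + h) - ψ x‖ₑ ^ p ≤ ENNReal.ofReal B) :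
    ∃ C' : ℝ, ∀ δ, 0 < δ → modulusLp (ENNReal.ofReal p) ψ δ ≤ ENNReal.ofReal (C' * δ ^ γ) := by
  refine ⟨max (C ^ (1 / p)) (B ^ (1 / p) / h₀ ^ γ), fun δ hδ => iSup₂_le fun h hh => ?_⟩
  obtain ⟨hh0, hhδ⟩ := hh
  rcases le_or_gt h h₀ with hle | hlt
  · refine (eLpNorm_ofReal_le_of_lintegral_le hp (by positivity) (hsmall h hh0 hle)).trans
      (ENNReal.ofReal_le_ofReal ?_)
    rw [mul_rpow hC (by positivity), ← rpow_mul hh0.le, mul_assoc, mul_one_div_cancel hp.ne',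
      mul_one]
    gcongr
    exact le_max_left _ _
  · refine (eLpNorm_ofReal_le_of_lintegral_le hp hB (hlarge h)).trans
      (ENNReal.ofReal_le_ofReal ?_)
    calc B ^ (1 / p) = B ^ (1 / p) / h₀ ^ γ * h₀ ^ γ := by
          rw [div_mul_cancel₀ _ (rpow_pos_of_pos hh₀ γ).ne']
      _ ≤ max (C ^ (1 / p)) (B ^ (1 / p) / h₀ ^ γ) * δ ^ γ := by
          gcongr
          exacts [le_max_right _ _, hlt.le.trans hhδ]

theorem memLip_of_lintegral_le {ψ : ℝ → ℝ} {p γ h₀ C : ℝ} (hp : 1 ≤ p) (hγ : 0 ≤ γ)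
    (hh₀ : 0 < h₀) (hC : 0 ≤ C) (hper : Function.Periodic ψ (2 * π))
    (hψ : MemLp ψ (ENNReal.ofReal p) (volume.restrict (Ioc (-π) π)))
    (hsmall : ∀ h, 0 < h → h ≤ h₀ →
      ∫⁻ x in Ioc (-π) π, ‖ψ (x + h) - ψ x‖ₑ ^ p ≤ ENNReal.ofReal (C * h ^ (γ * p))) :
    MemLip (ENNReal.ofReal p) γ ψ := by
  have hp0 : 0 < p := by linarith
  have hfin : ∫⁻ x in Ioc (-π) π, ‖ψ x‖ₑ ^ p ≠ ⊤ := by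
    have := (eLpNorm_lt_top_iff_lintegral_rpow_enorm_lt_top (by simpa using hp0)
      ENNReal.ofReal_ne_top).1 hψ.2
    rw [ENNReal.toReal_ofReal hp0.le] at this
    exact this.ne
  have hlarge (h : ℝ) : ∫⁻ x in Ioc (-π) π, ‖ψ (x + h) - ψ x‖ₑ ^ p ≤
      ENNReal.ofReal (2 ^ p * ∫⁻ x in Ioc (-π) π, ‖ψ x‖ₑ ^ p).toReal := by
    rw [ENNReal.ofReal_toReal (ENNReal.mul_ne_top (by simp) hfin)]
    have hmeas := hψ.1
    have hperiod : Ioc (-π) π = Ioc (-π) (-π + 2 * π) := by ring_nf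
    rw [hperiod] at hmeas ⊢
    exact hper.setLIntegral_Ioc_enorm_sub_rpow_le two_pi_pos hp hmeas h
  exact ⟨hψ, exists_modulusLp_le_of_lintegral_le hp0 hγ hh₀ ENNReal.toReal_nonneg hC hsmall
    hlarge⟩

theorem lipschitz_of_power_bounds_general
    (p α : ℝ) (hp : 1 < p) (hα0 : 0 < α) (hαp : α * p < 1)
    (f : ℝ → ℝ) (hper : Function.Periodic f (2 * Real.pi))
    (hdiff : ∀ x ∈ Set.Icc (-Real.pi) Real.pi, x ≠ 0 → DifferentiableAt ℝ f x)
    (M₁ M₂ : ℝ) (hM₁ : 0 < M₁) (hM₂ : 0 < M₂)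
    (hb : ∀ x ∈ Set.Icc (-Real.pi) Real.pi, x ≠ 0 → |f x| ≤ M₁ * |x| ^ (-α))
    (hd : ∀ x ∈ Set.Icc (-Real.pi) Real.pi, x ≠ 0 → |deriv f x| ≤ M₂ * |x| ^ (-(α + 1))) :
    MemLip (ENNReal.ofReal p) (1 / p - α) f := by
  have hp0 : 0 < p := by linarith
  have hb' : ∀ x, |x| ≤ π → x ≠ 0 → |f x| ≤ M₁ * |x| ^ (-α) := fun x hx => hb x (abs_le.1 hx)
  have hmeas : AEStronglyMeasurable f (volume.restrict (Icc (-π) π)) :=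
    aestronglyMeasurable_restrict_of_continuousOn_diff_singleton measurableSet_Icc
      fun x hx => (hdiff x hx.1 hx.2).continuousAt.continuousWithinAt
  have hmem : MemLp f (ENNReal.ofReal p) (volume.restrict (Ioc (-π) π)) := by
    refine ⟨hmeas.mono_measure (Measure.restrict_mono Ioc_subset_Icc_self le_rfl),
      (eLpNorm_lt_top_iff_lintegral_rpow_enorm_lt_top (by simpa using hp0)
        ENNReal.ofReal_ne_top).2 ?_⟩
    rw [ENNReal.toReal_ofReal hp0.le]
    exact ((lintegral_mono_set fun x hx => abs_le.2 (Ioc_subset_Icc_self hx)).trans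
      (setLIntegral_abs_le_enorm_rpow_le hp0 hαp hM₁.le pi_pos.le hb')).trans_lt
      ENNReal.ofReal_lt_top
  obtain ⟨C, hC, hsmall⟩ := exists_setLIntegral_Ioc_enorm_sub_rpow_le pi_pos hp.le hα0 hαp hM₁.le
    hM₂.le hmeas hb' (fun t ht => hper.differentiableAt_of_forall_Icc pi_pos hdiff ht)
    (fun t ht => hper.abs_deriv_le_of_forall_Icc pi_pos (g := fun y => M₂ * y ^ (-(α + 1))) hd ht)
  refine memLip_of_lintegral_le hp.le ?_ (by positivity : 0 < π / 3) hC hper hmem ?_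
  · rw [sub_nonneg, le_div_iff₀ hp0]
    linarith
  · intro h hh hhπ
    rw [sub_mul, one_div_mul_cancel hp0.ne']
    exact hsmall h hh hhπ

theorem lipschitz_of_power_bounds
    (p α : ℝ) (hp : 1 < p) (hα0 : 0 < α) (hα1 : α < 1) (hαp : α * p < 1)
    (f : ℝ → ℝ) (hper : Function.Periodic f (2 * Real.pi))
    (hdiff : ∀ x ∈ Set.Icc (-Real.pi) Real.pi, x ≠ 0 → DifferentiableAt ℝ f x)
    (M₁ M₂ : ℝ) (hM₁ : 0 < M₁) (hM₂ : 0 < M₂)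
    (hb : ∀ x ∈ Set.Icc (-Real.pi) Real.pi, x ≠ 0 → |f x| ≤ M₁ * |x| ^ (-α))
    (hd : ∀ x ∈ Set.Icc (-Real.pi) Real.pi, x ≠ 0 → |deriv f x| ≤ M₂ * |x| ^ (-(α + 1))) :
    MemLip (ENNReal.ofReal p) (1 / p - α) f :=
  lipschitz_of_power_bounds_general p α hp hα0 hαp f hper hdiff M₁ M₂ hM₁ hM₂ hb hd
end

section
/- Let 0 < γ < 1, 0 < θ < 1, and y₀ > 2. Then there exists a constant c > 0, depending only on γ, θ, and y₀, such that for every y with 1 < y < y₀, ∫_1^2 (xy−1)^{−θ}(x−1)^{−γ} dx ≥ c·(y−1)^{1−γ−θ}. -/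
/-!
On `[1, 1 + ε]` with `ε = (y - 1) / y₀` we have `x y - 1 = (x - 1) y + (y - 1) ≤ 2 (y - 1)`,
so the integrand is at least `(2 (y - 1))^(-θ) (x - 1)^(-γ)`, whose integral over that interval is
`(2 (y - 1))^(-θ) ε^(1 - γ) / (1 - γ)`, a constant multiple of `(y - 1)^(1 - γ - θ)`.
-/

open MeasureTheory Real intervalIntegral

lemma intervalIntegrable_sub_rpow {r : ℝ} (hr : -1 < r) (a b : ℝ) :
    IntervalIntegrable (fun x => (x - a) ^ r) volume a b := by
  simpa using (intervalIntegrable_rpow' (a := 0) (b := b - a) hr).comp_sub_right a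

lemma integral_sub_rpow {r : ℝ} (hr : -1 < r) (a t : ℝ) :
    ∫ x in a..a + t, (x - a) ^ r = t ^ (r + 1) / (r + 1) := by
  rw [integral_comp_sub_right (fun x => x ^ r), add_sub_cancel_left, sub_self,
    integral_rpow (Or.inl hr), zero_rpow (by linarith), sub_zero]

lemma mul_sub_one_le_two_mul_sub_one {x y ε : ℝ} (hy : 0 ≤ y) (hεy : ε * y ≤ y - 1)
    (hx : x ≤ 1 + ε) : x * y - 1 ≤ 2 * (y - 1) := by
  nlinarith

lemma intervalIntegrable_mul_sub_one_rpow_mul_sub_one_rpow {y γ : ℝ} (hy : 1 < y)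
    (hγ : γ < 1) (θ : ℝ) ⦃b : ℝ⦄ (hb : 1 ≤ b) :
    IntervalIntegrable (fun x => (x * y - 1) ^ (-θ) * (x - 1) ^ (-γ)) volume 1 b := by
  refine (intervalIntegrable_sub_rpow (by linarith) 1 b).continuousOn_mul ?_
  refine ContinuousOn.rpow_const (by fun_prop) fun x hx => Or.inl ?_
  rw [Set.uIcc_of_le hb] at hx
  nlinarith [hx.1]

lemma two_mul_sub_one_rpow_mul_le_integral {y γ θ ε : ℝ} (hy : 1 < y) (hγ : γ < 1) (hθ : 0 ≤ θ)
    (hε : 0 ≤ ε) (hε1 : ε ≤ 1) (hεy : ε * y ≤ y - 1) :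
    (2 * (y - 1)) ^ (-θ) * (ε ^ (1 - γ) / (1 - γ)) ≤
      ∫ x in (1 : ℝ)..2, (x * y - 1) ^ (-θ) * (x - 1) ^ (-γ) := by
  have hf := intervalIntegrable_mul_sub_one_rpow_mul_sub_one_rpow hy hγ θ
  calc (2 * (y - 1)) ^ (-θ) * (ε ^ (1 - γ) / (1 - γ))
      = ∫ x in (1 : ℝ)..1 + ε, (2 * (y - 1)) ^ (-θ) * (x - 1) ^ (-γ) := by
        rw [intervalIntegral.integral_const_mul, integral_sub_rpow (by linarith), neg_add_eq_sub]
    _ ≤ ∫ x in (1 : ℝ)..1 + ε, (x * y - 1) ^ (-θ) * (x - 1) ^ (-γ) := by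
        refine integral_mono_on (by linarith)
          ((intervalIntegrable_sub_rpow (by linarith) 1 _).const_mul _)
          (hf (by linarith)) fun x hx => ?_
        gcongr ?_ * _
        · exact rpow_nonneg (by linarith [hx.1]) _
        · exact rpow_le_rpow_of_nonpos (by nlinarith [hx.1])
            (mul_sub_one_le_two_mul_sub_one (by linarith) hεy hx.2) (by linarith)
    _ ≤ ∫ x in (1 : ℝ)..2, (x * y - 1) ^ (-θ) * (x - 1) ^ (-γ) := by
        refine integral_mono_interval le_rfl (by linarith) (by linarith) ?_ (hf one_le_two)
        rw [Filter.EventuallyLE, ae_restrict_iff' measurableSet_Ioc]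
        filter_upwards with x hx
        exact mul_nonneg (rpow_nonneg (by nlinarith [hx.1]) _)
          (rpow_nonneg (by linarith [hx.1]) _)

theorem integral_lower_bound_general
    (γ θ y₀ : ℝ) (hγ1 : γ < 1) (hθ0 : 0 < θ) (hy₀ : 2 < y₀) :
    ∃ c > (0 : ℝ), ∀ y : ℝ, 1 < y → y < y₀ →
      c * (y - 1) ^ (1 - γ - θ) ≤ ∫ x in (1 : ℝ)..2, (x * y - 1) ^ (-θ) * (x - 1) ^ (-γ) := by
  have hy₀pos : 0 < y₀ := by linarith
  have hγ : 0 < 1 - γ := by linarith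
  refine ⟨2 ^ (-θ) * y₀ ^ (γ - 1) / (1 - γ), by positivity, fun y hy hyy₀ => ?_⟩
  have hy1 : 0 < y - 1 := by linarith
  calc 2 ^ (-θ) * y₀ ^ (γ - 1) / (1 - γ) * (y - 1) ^ (1 - γ - θ)
      = (2 * (y - 1)) ^ (-θ) * (((y - 1) / y₀) ^ (1 - γ) / (1 - γ)) := by
        rw [mul_rpow zero_le_two hy1.le, div_rpow hy1.le hy₀pos.le,
          show γ - 1 = -(1 - γ) by ring, rpow_neg hy₀pos.le,
          show 1 - γ - θ = -θ + (1 - γ) by ring, rpow_add hy1]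
        field_simp
    _ ≤ _ := two_mul_sub_one_rpow_mul_le_integral hy hγ1 hθ0.le (by positivity)
        ((div_le_one hy₀pos).2 (by linarith))
        (by rw [div_mul_eq_mul_div, div_le_iff₀ hy₀pos]; nlinarith)

theorem integral_lower_bound
    (γ θ y₀ : ℝ) (hγ0 : 0 < γ) (hγ1 : γ < 1) (hθ0 : 0 < θ) (hθ1 : θ < 1) (hy₀ : 2 < y₀) :
    ∃ c > (0 : ℝ), ∀ y : ℝ, 1 < y → y < y₀ →
      c * (y - 1) ^ (1 - γ - θ) ≤ ∫ x in (1 : ℝ)..2, (x * y - 1) ^ (-θ) * (x - 1) ^ (-γ) :=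
  integral_lower_bound_general γ θ y₀ hγ1 hθ0 hy₀
end

section
/- Let ν be a positive integer, let α, β be real numbers with 0 < α + β < 1/ν, let η satisfy (α+β)/2 < η < 1/(2ν), and let t ∈ (0,π). Define A_t = {(z₁,…,z_{2ν}) ∈ ℝ^{2ν} : |z₁| ≤ t, |z₁z₂| ≤ t, …, |z₁⋯z_{2ν}| ≤ t, and |z₁| > (1/2)|z₁z₂| > (1/4)|z₁z₂z₃| > … > (1/2^{2ν−1})|z₁⋯z_{2ν}| > (1/2^{2ν})|z₁|}. Then the integral I = ∫_{A_t} |z₁|^{2νη−ν(α+β)−1} · |z₂⋯z_{2ν} − 1|^{η−1} · ∏_{i=2}^{2ν} |zᵢ − 1|^{η−1} dz₁⋯dz_{2ν} diverges, i.e., I = +∞. -/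
/-!
Let `b = t / 2^(2ν-1)`. For `0 < s ≤ 1` the box `z₁ ∈ (b/2, b)`, `zᵢ ∈ (1, 1 + s)` for `i ≥ 2`
lies in `A_t`, and has volume `(b/2) s^(2ν-1)`. On it `|z₁|^(…)` is bounded below,
`0 < z₂⋯z_{2ν} - 1 ≤ 2^(2ν-1) s` and `0 < zᵢ - 1 < s`; as `η - 1 < 0`, the integrand is
`≳ s^(2ν(η-1))`. Hence `I ≳ s^(2νη-1)`, which tends to `∞` as `s → 0⁺` because `2νη < 1`.
-/

open MeasureTheory Real Set Filter Topology Function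

theorem ENNReal.eq_top_of_forall_ofReal_mul_rpow_le {I : ENNReal} {C p : ℝ} (hC : 0 < C)
    (hp : p < 0) (h : ∀ s ∈ Ioc (0 : ℝ) 1, ENNReal.ofReal (C * s ^ p) ≤ I) : I = ⊤ := by
  have hlim : Tendsto (fun s : ℝ => ENNReal.ofReal (C * s ^ p)) (𝓝[>] 0) (𝓝 ⊤) :=
    ENNReal.tendsto_ofReal_atTop.comp ((tendsto_rpow_neg_nhdsGT_zero hp).const_mul_atTop hC)
  exact top_le_iff.1 <| le_of_tendsto hlim <| eventually_of_mem (Ioc_mem_nhdsGT one_pos) h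

theorem one_add_pow_sub_one_le {s : ℝ} (hs₀ : 0 ≤ s) (hs₁ : s ≤ 1) (m : ℕ) :
    (1 + s) ^ m - 1 ≤ 2 ^ m * s := by
  induction m with
  | zero => simp [hs₀]
  | succ m ih =>
    have : (1 + s) ^ m ≤ 2 ^ m := pow_le_pow_left₀ (by linarith) (by linarith) m
    calc (1 + s) ^ (m + 1) - 1 = ((1 + s) ^ m - 1) + s * (1 + s) ^ m := by ring
      _ ≤ 2 ^ m * s + s * 2 ^ m := by gcongr
      _ = 2 ^ (m + 1) * s := by ring

theorem Finset.prod_sub_one_le {ι : Type*} (T : Finset ι) {x : ι → ℝ} {s : ℝ} (hs₀ : 0 ≤ s)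
    (hs₁ : s ≤ 1) (hx : ∀ i ∈ T, x i ∈ Set.Icc 1 (1 + s)) :
    ∏ i ∈ T, x i - 1 ≤ 2 ^ T.card * s :=
  calc ∏ i ∈ T, x i - 1 ≤ (1 + s) ^ T.card - 1 := by
        rw [← Finset.prod_const]
        exact sub_le_sub_right (Finset.prod_le_prod (fun i hi => zero_le_one.trans (hx i hi).1)
          fun i hi => (hx i hi).2) 1
    _ ≤ 2 ^ T.card * s := one_add_pow_sub_one_le hs₀ hs₁ _

theorem min_rpow_le_rpow {a b x : ℝ} (ha : 0 < a) (hx : x ∈ Icc a b) (e : ℝ) :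
    min (a ^ e) (b ^ e) ≤ x ^ e := by
  rcases le_or_gt 0 e with he | he
  · exact (min_le_left _ _).trans (rpow_le_rpow ha.le hx.1 he)
  · exact (min_le_right _ _).trans (rpow_le_rpow_of_nonpos (ha.trans_le hx.1) hx.2 he.le)

section NearOneBox

variable {ι : Type*} [DecidableEq ι]

def nearOneBox (i₀ : ι) (a b s : ℝ) : Set (ι → ℝ) :=
  univ.pi (update (fun _ => Ioo 1 (1 + s)) i₀ (Ioo a b))

theorem mem_nearOneBox {i₀ : ι} {a b s : ℝ} {z : ι → ℝ} :
    z ∈ nearOneBox i₀ a b s ↔ z i₀ ∈ Ioo a b ∧ ∀ i ≠ i₀, z i ∈ Ioo 1 (1 + s) := by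
  simp only [nearOneBox, mem_univ_pi]
  constructor
  · intro h
    exact ⟨by simpa using h i₀, fun i hi => by simpa [hi] using h i⟩
  · rintro ⟨h₀, h⟩ i
    rcases eq_or_ne i i₀ with rfl | hi <;> simp [*]

theorem measurableSet_nearOneBox [Fintype ι] (i₀ : ι) (a b s : ℝ) :
    MeasurableSet (nearOneBox i₀ a b s) :=
  MeasurableSet.univ_pi fun i => by
    rcases eq_or_ne i i₀ with rfl | hi <;> simp [*, measurableSet_Ioo]

theorem volume_nearOneBox [Fintype ι] (i₀ : ι) (a b s : ℝ) :
    volume (nearOneBox i₀ a b s) =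
      ENNReal.ofReal (b - a) * ENNReal.ofReal s ^ (Fintype.card ι - 1) := by
  rw [nearOneBox, volume_pi_pi, ← Finset.mul_prod_erase _ _ (Finset.mem_univ i₀),
    Finset.prod_congr rfl fun i hi => by rw [update_of_ne (Finset.ne_of_mem_erase hi)],
    Finset.prod_const, Finset.card_erase_of_mem (Finset.mem_univ _), Finset.card_univ]
  simp [Real.volume_Ioo]

noncomputable def singularIntegrand [Fintype ι] (i₀ : ι) (e₁ e₂ : ℝ) (z : ι → ℝ) : ℝ :=
  |z i₀| ^ e₁ * |(∏ i ∈ Finset.univ.erase i₀, z i) - 1| ^ e₂ *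
    ∏ i ∈ Finset.univ.erase i₀, |z i - 1| ^ e₂

theorem le_singularIntegrand [Fintype ι] [Nontrivial ι] {i₀ : ι} {a b s e₁ e₂ : ℝ} (ha : 0 < a)
    (hs₀ : 0 < s) (hs₁ : s ≤ 1) (he₂ : e₂ ≤ 0) {z : ι → ℝ} (hz : z ∈ nearOneBox i₀ a b s) :
    min (a ^ e₁) (b ^ e₁) * (2 ^ (Fintype.card ι - 1) * s) ^ e₂ *
        (s ^ e₂) ^ (Fintype.card ι - 1) ≤ singularIntegrand i₀ e₁ e₂ z := by
  obtain ⟨hz₀, hz⟩ := mem_nearOneBox.1 hz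
  set T := Finset.univ.erase i₀
  have hT : T.card = Fintype.card ι - 1 := by
    rw [Finset.card_erase_of_mem (Finset.mem_univ _), Finset.card_univ]
  have hzT : ∀ i ∈ T, z i ∈ Ioo 1 (1 + s) := fun i hi => hz i (Finset.ne_of_mem_erase hi)
  have hP : 1 < ∏ i ∈ T, z i := by
    obtain ⟨j, hj⟩ := exists_ne i₀
    simpa using Finset.prod_lt_prod_of_nonempty (fun _ _ => one_pos) (fun i hi => (hzT i hi).1)
      ⟨j, Finset.mem_erase.2 ⟨hj, Finset.mem_univ _⟩⟩
  have hP' : ∏ i ∈ T, z i - 1 ≤ 2 ^ (Fintype.card ι - 1) * s :=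
    hT ▸ T.prod_sub_one_le hs₀.le hs₁ fun i hi => Ioo_subset_Icc_self (hzT i hi)
  unfold singularIntegrand
  gcongr ?_ * ?_ * ?_
  · rw [abs_of_pos (ha.trans hz₀.1)]
    exact min_rpow_le_rpow ha ⟨hz₀.1.le, hz₀.2.le⟩ e₁
  · rw [abs_of_pos (sub_pos.2 hP)]
    exact rpow_le_rpow_of_nonpos (sub_pos.2 hP) hP' he₂
  · rw [← hT, ← Finset.prod_const]
    refine Finset.prod_le_prod (fun _ _ => by positivity) fun i hi => ?_
    have hzi := hzT i hi
    rw [abs_of_pos (sub_pos.2 hzi.1)]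
    exact rpow_le_rpow_of_nonpos (sub_pos.2 hzi.1) (by linarith [hzi.2]) he₂

theorem setLIntegral_singularIntegrand_eq_top [Fintype ι] [Nontrivial ι] {i₀ : ι}
    {S : Set (ι → ℝ)} {a b e₁ η : ℝ} (ha : 0 < a) (hab : a < b)
    (hη : Fintype.card ι * η < 1) (hS : ∀ s ∈ Ioc (0 : ℝ) 1, nearOneBox i₀ a b s ⊆ S) :
    ∫⁻ z in S, ENNReal.ofReal (singularIntegrand i₀ e₁ (η - 1) z) = ⊤ := by
  set m := Fintype.card ι - 1 with hm_def
  have hm : (m : ℝ) + 1 = Fintype.card ι := by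
    have := Fintype.card_pos (α := ι)
    rw [← Nat.cast_add_one, Nat.sub_add_cancel this]
  have hη₁ : η - 1 ≤ 0 := by
    rcases le_or_gt η 0 with h | h
    · linarith
    · nlinarith [(Nat.cast_nonneg m : (0 : ℝ) ≤ m)]
  set c := min (a ^ e₁) (b ^ e₁)
  have hc : 0 < c := lt_min (rpow_pos_of_pos ha e₁) (rpow_pos_of_pos (ha.trans hab) e₁)
  set K := c * ((2 : ℝ) ^ m) ^ (η - 1) * (b - a) with hK_def
  have hK : 0 < K := mul_pos (by positivity) (sub_pos.2 hab)
  refine ENNReal.eq_top_of_forall_ofReal_mul_rpow_le hK (sub_neg.2 hη) fun s ⟨hs₀, hs₁⟩ => ?_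
  have hsplit : s ^ (Fintype.card ι * η - 1) = s ^ (η - 1) * (s ^ (η - 1)) ^ m * s ^ m := by
    rw [← rpow_natCast (s ^ (η - 1)) m, ← rpow_mul hs₀.le, ← rpow_natCast s m,
      ← rpow_add hs₀, ← rpow_add hs₀, ← hm]
    ring_nf
  calc ENNReal.ofReal (K * s ^ (Fintype.card ι * η - 1))
      = ENNReal.ofReal (c * (2 ^ m * s) ^ (η - 1) * (s ^ (η - 1)) ^ m) *
          volume (nearOneBox i₀ a b s) := by
        rw [volume_nearOneBox, ← hm_def, ← ENNReal.ofReal_pow hs₀.le,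
          ← ENNReal.ofReal_mul (sub_pos.2 hab).le, ← ENNReal.ofReal_mul (by positivity), hsplit,
          mul_rpow (by positivity) hs₀.le, hK_def]
        congr 1
        ring
    _ ≤ ∫⁻ z in nearOneBox i₀ a b s, ENNReal.ofReal (singularIntegrand i₀ e₁ (η - 1) z) := by
        rw [← setLIntegral_const]
        exact setLIntegral_mono' (measurableSet_nearOneBox i₀ a b s) fun z hz =>
          ENNReal.ofReal_le_ofReal (le_singularIntegrand ha hs₀ hs₁ hη₁ hz)
    _ ≤ ∫⁻ z in S, ENNReal.ofReal (singularIntegrand i₀ e₁ (η - 1) z) :=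
        lintegral_mono_set (hS s ⟨hs₀, hs₁⟩)

end NearOneBox

section ChainRegion

variable {n : ℕ}

def partialProd (z : Fin n → ℝ) (k : Fin n) : ℝ :=
  ∏ i ∈ Finset.univ.filter (fun i => i ≤ k), z i

def chainRegion (n : ℕ) (hn : 0 < n) (t : ℝ) : Set (Fin n → ℝ) :=
  {z | (∀ k, |partialProd z k| ≤ t) ∧
    (∀ k : ℕ, ∀ hk : k + 1 < n,
      (1 / 2 ^ (k + 1) : ℝ) * |partialProd z ⟨k + 1, hk⟩| <
        (1 / 2 ^ k : ℝ) * |partialProd z ⟨k, by omega⟩|) ∧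
    (1 / 2 ^ n : ℝ) * |z ⟨0, hn⟩| < (1 / 2 ^ (n - 1) : ℝ) * |∏ i, z i|}

theorem partialProd_zero (z : Fin n → ℝ) (hn : 0 < n) : partialProd z ⟨0, hn⟩ = z ⟨0, hn⟩ := by
  have : Finset.univ.filter (fun i : Fin n => i ≤ ⟨0, hn⟩) = {⟨0, hn⟩} := by
    ext i
    simp [Fin.le_def, Fin.ext_iff]
  rw [partialProd, this, Finset.prod_singleton]

theorem partialProd_succ (z : Fin n → ℝ) (k : ℕ) (hk : k + 1 < n) :
    partialProd z ⟨k + 1, hk⟩ = z ⟨k + 1, hk⟩ * partialProd z ⟨k, by omega⟩ := by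
  have : Finset.univ.filter (fun i : Fin n => i ≤ ⟨k + 1, hk⟩) =
      insert ⟨k + 1, hk⟩ (Finset.univ.filter (fun i : Fin n => i ≤ ⟨k, by omega⟩)) := by
    ext i
    simp only [Finset.mem_filter, Finset.mem_insert, Finset.mem_univ, true_and, Fin.le_def,
      Fin.ext_iff]
    omega
  rw [partialProd, this, Finset.prod_insert (by simp [Fin.le_def])]
  rfl

theorem prod_eq_partialProd_last (z : Fin n → ℝ) (hn : 0 < n) :
    ∏ i, z i = partialProd z ⟨n - 1, by omega⟩ := by
  rw [partialProd, Finset.filter_true_of_mem fun i _ => Fin.le_def.2 (Nat.le_sub_one_of_lt i.2)]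

theorem partialProd_mem_Icc {z : Fin n → ℝ} {hn : 0 < n} (hz₀ : 0 ≤ z ⟨0, hn⟩)
    (hz : ∀ i ≠ ⟨0, hn⟩, z i ∈ Icc 1 2) :
    ∀ k (hk : k < n), partialProd z ⟨k, hk⟩ ∈ Icc (z ⟨0, hn⟩) (2 ^ k * z ⟨0, hn⟩)
  | 0, _ => by simp [partialProd_zero]
  | k + 1, hk => by
    obtain ⟨hP₁, hP₂⟩ := partialProd_mem_Icc hz₀ hz k (by omega)
    obtain ⟨hz₁, hz₂⟩ := hz ⟨k + 1, hk⟩ (by simp [Fin.ext_iff])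
    rw [partialProd_succ]
    constructor
    · exact hP₁.trans (le_mul_of_one_le_left (hz₀.trans hP₁) hz₁)
    · calc z ⟨k + 1, hk⟩ * partialProd z ⟨k, _⟩ ≤ 2 * (2 ^ k * z ⟨0, hn⟩) :=
            mul_le_mul hz₂ hP₂ (hz₀.trans hP₁) zero_le_two
        _ = 2 ^ (k + 1) * z ⟨0, hn⟩ := by ring

theorem mem_chainRegion {hn : 0 < n} {t b : ℝ} (hb : 2 ^ (n - 1) * b ≤ t) {z : Fin n → ℝ}
    (hz₀ : z ⟨0, hn⟩ ∈ Ioo 0 b) (hz : ∀ i ≠ ⟨0, hn⟩, z i ∈ Ioo 1 2) :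
    z ∈ chainRegion n hn t := by
  have hP := partialProd_mem_Icc hz₀.1.le fun i hi => Ioo_subset_Icc_self (hz i hi)
  have hP₀ : ∀ k (hk : k < n), 0 < partialProd z ⟨k, hk⟩ := fun k hk =>
    hz₀.1.trans_le (hP k hk).1
  refine ⟨fun k => ?_, fun k hk => ?_, ?_⟩
  · rw [abs_of_pos (hP₀ k k.2)]
    calc partialProd z k ≤ 2 ^ (k : ℕ) * z ⟨0, hn⟩ := (hP k k.2).2
      _ ≤ 2 ^ (n - 1) * b :=
          mul_le_mul (pow_le_pow_right₀ one_le_two (Nat.le_sub_one_of_lt k.2)) hz₀.2.le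
            hz₀.1.le (by positivity)
      _ ≤ t := hb
  · have hzk := hz ⟨k + 1, hk⟩ (by simp [Fin.ext_iff])
    rw [partialProd_succ, abs_mul, abs_of_pos (zero_lt_one.trans hzk.1)]
    have := abs_pos_of_pos (hP₀ k (by omega))
    calc (1 / 2 ^ (k + 1) : ℝ) * (z ⟨k + 1, hk⟩ * |partialProd z ⟨k, _⟩|)
        = (1 / 2 ^ k : ℝ) * |partialProd z ⟨k, _⟩| * (z ⟨k + 1, hk⟩ / 2) := by ring
      _ < (1 / 2 ^ k : ℝ) * |partialProd z ⟨k, _⟩| * 1 := by gcongr; linarith [hzk.2]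
      _ = _ := mul_one _
  · rw [prod_eq_partialProd_last z hn, abs_of_pos hz₀.1, abs_of_pos (hP₀ _ _)]
    calc (1 / 2 ^ n : ℝ) * z ⟨0, hn⟩ < 1 / 2 ^ (n - 1) * z ⟨0, hn⟩ := by
          gcongr
          · exact hz₀.1
          · exact one_lt_two
          · omega
      _ ≤ 1 / 2 ^ (n - 1) * partialProd z ⟨n - 1, _⟩ := by gcongr; exact (hP _ _).1

theorem nearOneBox_subset_chainRegion (hn : 0 < n) {a b s t : ℝ} (ha : 0 < a) (hs : s ≤ 1)
    (hb : 2 ^ (n - 1) * b ≤ t) : nearOneBox ⟨0, hn⟩ a b s ⊆ chainRegion n hn t := by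
  intro z hz
  obtain ⟨hz₀, hz⟩ := mem_nearOneBox.1 hz
  exact mem_chainRegion hb ⟨ha.trans hz₀.1, hz₀.2⟩ fun i hi =>
    ⟨(hz i hi).1, (hz i hi).2.trans_le (by linarith)⟩

end ChainRegion

theorem LP_integral_diverges
    (ν : ℕ) (hν : 0 < ν) (α β η t : ℝ)
    (hη2 : η < 1 / (2 * (ν : ℝ)))
    (ht : t ∈ Set.Ioo 0 Real.pi) :
    (∫⁻ z in {z : Fin (2 * ν) → ℝ |
        (∀ k : Fin (2 * ν), |∏ i ∈ Finset.univ.filter (fun i => i ≤ k), z i| ≤ t) ∧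
        (∀ k : ℕ, ∀ hk : k + 1 < 2 * ν,
          (1 / 2 ^ (k + 1) : ℝ) *
              |∏ i ∈ Finset.univ.filter (fun i => i ≤ (⟨k + 1, hk⟩ : Fin (2 * ν))), z i| <
          (1 / 2 ^ k : ℝ) *
              |∏ i ∈ Finset.univ.filter (fun i => i ≤ (⟨k, by omega⟩ : Fin (2 * ν))), z i|) ∧
        (1 / 2 ^ (2 * ν) : ℝ) * |z ⟨0, by omega⟩| <
          (1 / 2 ^ (2 * ν - 1) : ℝ) * |∏ i, z i|},
      ENNReal.ofReal
        (|z ⟨0, by omega⟩| ^ (2 * (ν : ℝ) * η - (ν : ℝ) * (α + β) - 1) *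
          |(∏ i ∈ Finset.univ.erase (⟨0, by omega⟩ : Fin (2 * ν)), z i) - 1| ^ (η - 1) *
          ∏ i ∈ Finset.univ.erase (⟨0, by omega⟩ : Fin (2 * ν)), |z i - 1| ^ (η - 1))) = ⊤ := by
  have h2ν : 0 < 2 * ν := by omega
  have : Nontrivial (Fin (2 * ν)) := Fin.nontrivial_iff_two_le.2 (by omega)
  have hη : (Fintype.card (Fin (2 * ν)) : ℝ) * η < 1 := by
    rw [Fintype.card_fin, Nat.cast_mul, Nat.cast_two, mul_comm]
    rwa [lt_div_iff₀ (by positivity)] at hη2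
  set b := t / 2 ^ (2 * ν - 1)
  have hb : 0 < b := div_pos ht.1 (by positivity)
  exact setLIntegral_singularIntegrand_eq_top (half_pos hb) (half_lt_self hb) hη fun s hs =>
    nearOneBox_subset_chainRegion h2ν (half_pos hb) hs.2 (mul_div_cancel₀ t (by positivity)).le
end

section
/- Let γ ∈ (0,1], let p₀, p₁, p₂, p₃ ∈ [1,∞] satisfy 1/p₀ + 1/p₁ + 1/p₂ + 1/p₃ ≤ 1, and let h₀, h₁, h₂, h₃ be 2π-periodic real-valued functions with hᵢ ∈ Lip(pᵢ, γ) for i = 0,1,2,3. Define φ(t₁,t₂,t₃) = ∫_{−π}^{π} h₀(u) h₁(u−t₁) h₂(u−t₂) h₃(u−t₃) du. Then there exists a constant C > 0 such that |φ(t) − φ(0,0,0)| ≤ C·(|t₁|+|t₂|+|t₃|)^γ for all t = (t₁,t₂,t₃) ∈ [−π,π]³. -/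
open MeasureTheory Real
open scoped ENNReal

/-!
Write `φ(t) - φ(0)` as a telescoping sum of three integrals, in each of which one factor
`hᵢ(u)` of the base product is replaced by the difference `hᵢ(u - tᵢ) - hᵢ(u)`. By the
generalized Hölder inequality each integral is bounded by the product of the `L^{pᵢ}` norms of
its factors. Translation does not change the `L^p` norm of a periodic function over a period
(both are the norm of its lift to the circle), so the shifted factors have the norms of the
unshifted ones, and the difference has norm at most `ω_{pᵢ}(hᵢ, |tᵢ|) ≤ Cᵢ |tᵢ|^γ`.
-/

open Set

section Periodic

theorem AddCircle.measurePreserving_coe_equivIoc (T : ℝ) [Fact (0 < T)] (t : ℝ) :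
    MeasurePreserving (fun x => (equivIoc T t x : ℝ)) volume (volume.restrict (Ioc t (t + T))) :=
  (measurePreserving_subtype_coe measurableSet_Ioc).comp (measurePreserving_equivIoc T)

theorem AddCircle.measurableEmbedding_coe_equivIoc (T : ℝ) [Fact (0 < T)] (t : ℝ) :
    MeasurableEmbedding (fun x : AddCircle T => (equivIoc T t x : ℝ)) :=
  (MeasurableEmbedding.subtype_coe measurableSet_Ioc).comp
    (measurableEquivIoc T t).measurableEmbedding

theorem Function.Periodic.comp_coe_equivIoc {α : Type*} {T : ℝ} [Fact (0 < T)] {g : ℝ → α}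
    (hg : Periodic g T) (t : ℝ) : (g ∘ fun x => (AddCircle.equivIoc T t x : ℝ)) = hg.lift :=
  funext fun _ => (hg.lift_coe _).symm.trans (congrArg hg.lift AddCircle.coe_equivIoc)

variable {E : Type*} [NormedAddCommGroup E] {p : ℝ≥0∞}

theorem Real.map_add_right_restrict_Ioc (a s t : ℝ) :
    Measure.map (· + a) (volume.restrict (Ioc s t)) = volume.restrict (Ioc (s + a) (t + a)) := by
  have h := (measurableEmbedding_addRight a).restrict_map volume (Ioc (s + a) (t + a))
  rwa [map_add_right_eq_self, preimage_add_const_Ioc, add_sub_cancel_right,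
    add_sub_cancel_right, eq_comm] at h

theorem eLpNorm_comp_add_right_restrict_Ioc (g : ℝ → E) (a s t : ℝ) :
    eLpNorm (fun x => g (x + a)) p (volume.restrict (Ioc s t))
      = eLpNorm g p (volume.restrict (Ioc (s + a) (t + a))) := by
  rw [← Real.map_add_right_restrict_Ioc, (measurableEmbedding_addRight a).eLpNorm_map_measure]
  rfl

theorem memLp_comp_add_right_restrict_Ioc_iff (g : ℝ → E) (a s t : ℝ) :
    MemLp (fun x => g (x + a)) p (volume.restrict (Ioc s t))
      ↔ MemLp g p (volume.restrict (Ioc (s + a) (t + a))) := by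
  rw [← Real.map_add_right_restrict_Ioc, (measurableEmbedding_addRight a).memLp_map_measure_iff]
  rfl

namespace Function.Periodic

variable {T : ℝ} {g : ℝ → E}

theorem eLpNorm_restrict_Ioc_eq_lift [Fact (0 < T)] (hg : Periodic g T) (t : ℝ) :
    eLpNorm g p (volume.restrict (Ioc t (t + T))) = eLpNorm hg.lift p volume := by
  rw [← (AddCircle.measurePreserving_coe_equivIoc T t).map_eq,
    (AddCircle.measurableEmbedding_coe_equivIoc T t).eLpNorm_map_measure, hg.comp_coe_equivIoc]

theorem memLp_restrict_Ioc_iff_lift [Fact (0 < T)] (hg : Periodic g T) (t : ℝ) :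
    MemLp g p (volume.restrict (Ioc t (t + T))) ↔ MemLp hg.lift p volume := by
  rw [← (AddCircle.measurePreserving_coe_equivIoc T t).map_eq,
    (AddCircle.measurableEmbedding_coe_equivIoc T t).memLp_map_measure_iff, hg.comp_coe_equivIoc]

theorem eLpNorm_comp_sub_right_restrict_Ioc (hg : Periodic g T) (hT : 0 < T) {s t : ℝ}
    (hst : t = s + T) (a : ℝ) :
    eLpNorm (fun x => g (x - a)) p (volume.restrict (Ioc s t))
      = eLpNorm g p (volume.restrict (Ioc s t)) := by
  have := Fact.mk hT
  subst hst
  simp_rw [sub_eq_add_neg, eLpNorm_comp_add_right_restrict_Ioc, add_right_comm s T,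
    hg.eLpNorm_restrict_Ioc_eq_lift]

theorem memLp_comp_sub_right_restrict_Ioc (hg : Periodic g T) (hT : 0 < T) {s t : ℝ}
    (hst : t = s + T) (a : ℝ) (h : MemLp g p (volume.restrict (Ioc s t))) :
    MemLp (fun x => g (x - a)) p (volume.restrict (Ioc s t)) := by
  have := Fact.mk hT
  subst hst
  simp_rw [sub_eq_add_neg, memLp_comp_add_right_restrict_Ioc_iff, add_right_comm s T,
    hg.memLp_restrict_Ioc_iff_lift] at h ⊢
  exact h

end Function.Periodic

end Periodic

section Holder

variable {α : Type*} [MeasurableSpace α] {μ : Measure α}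

theorem eLpNorm_prod_le {ι 𝕜 : Type*} [NormedCommRing 𝕜] [NormOneClass 𝕜] {s : Finset ι}
    {f : ι → α → 𝕜} {p : ι → ℝ≥0∞} (hf : ∀ i ∈ s, AEStronglyMeasurable (f i) μ) :
    eLpNorm (∏ i ∈ s, f i) (∑ i ∈ s, (p i)⁻¹)⁻¹ μ ≤ ∏ i ∈ s, eLpNorm (f i) (p i) μ := by
  induction s using Finset.cons_induction with
  | empty =>
    simpa [eLpNorm_exponent_top] using eLpNormEssSup_le_of_ae_enorm_bound (μ := μ)
      (f := (1 : α → 𝕜)) (C := 1) (.of_forall fun _ => by simp)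
  | cons i s _ ih =>
    rw [Finset.prod_cons, Finset.prod_cons, Finset.sum_cons]
    have hs := Finset.forall_of_forall_cons hf
    calc eLpNorm (f i * ∏ j ∈ s, f j) ((p i)⁻¹ + ∑ j ∈ s, (p j)⁻¹)⁻¹ μ
        ≤ eLpNorm (f i) (p i) μ * eLpNorm (∏ j ∈ s, f j) (∑ j ∈ s, (p j)⁻¹)⁻¹ μ := by
          simpa only [smul_eq_mul] using eLpNorm_smul_le_mul_eLpNorm (p := p i)
            (q := (∑ j ∈ s, (p j)⁻¹)⁻¹) (r := ((p i)⁻¹ + ∑ j ∈ s, (p j)⁻¹)⁻¹)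
            (Finset.aestronglyMeasurable_prod _ hs) (hf i (Finset.mem_cons_self i s))
            (hpqr := ⟨by rw [inv_inv, inv_inv]⟩)
      _ ≤ _ := by gcongr; exact ih hs

theorem eLpNorm_one_prod_le [IsFiniteMeasure μ] {ι 𝕜 : Type*} [NormedCommRing 𝕜] [NormOneClass 𝕜]
    {s : Finset ι} {f : ι → α → 𝕜} {p : ι → ℝ≥0∞} (hp : ∑ i ∈ s, (p i)⁻¹ ≤ 1)
    (hf : ∀ i ∈ s, AEStronglyMeasurable (f i) μ) :
    eLpNorm (∏ i ∈ s, f i) 1 μ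
      ≤ μ univ ^ (1 - ∑ i ∈ s, (p i)⁻¹).toReal * ∏ i ∈ s, eLpNorm (f i) (p i) μ := by
  have hr : (1 : ℝ≥0∞) ≤ (∑ i ∈ s, (p i)⁻¹)⁻¹ := ENNReal.one_le_inv.mpr hp
  refine (eLpNorm_le_eLpNorm_mul_rpow_measure_univ hr
    (Finset.aestronglyMeasurable_prod _ hf)).trans ?_
  rw [mul_comm (eLpNorm _ _ _), ENNReal.toReal_sub_of_le hp ENNReal.one_ne_top,
    ENNReal.toReal_inv]
  simp only [ENNReal.toReal_one, one_div, inv_inv, inv_one]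
  gcongr
  exact eLpNorm_prod_le hf

variable [IsFiniteMeasure μ] {p₀ p₁ p₂ p₃ : ℝ≥0∞} {f₀ f₁ f₂ f₃ : α → ℝ}

theorem integrable_mul₄ (hp : p₀⁻¹ + p₁⁻¹ + p₂⁻¹ + p₃⁻¹ ≤ 1) (hf₀ : MemLp f₀ p₀ μ)
    (hf₁ : MemLp f₁ p₁ μ) (hf₂ : MemLp f₂ p₂ μ) (hf₃ : MemLp f₃ p₃ μ) :
    Integrable (fun x => f₀ x * f₁ x * f₂ x * f₃ x) μ := by
  have h := MemLp.prod' (s := Finset.univ) (f := ![f₀, f₁, f₂, f₃]) (p := ![p₀, p₁, p₂, p₃])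
    (μ := μ) (by intro i _; fin_cases i <;> assumption)
  simp only [Fin.prod_univ_four, Fin.sum_univ_four] at h
  exact memLp_one_iff_integrable.mp (h.mono_exponent (ENNReal.one_le_inv.mpr hp))

theorem abs_integral_mul₄_le (hp : p₀⁻¹ + p₁⁻¹ + p₂⁻¹ + p₃⁻¹ ≤ 1) (hf₀ : MemLp f₀ p₀ μ)
    (hf₁ : MemLp f₁ p₁ μ) (hf₂ : MemLp f₂ p₂ μ) (hf₃ : MemLp f₃ p₃ μ) :
    |∫ x, f₀ x * f₁ x * f₂ x * f₃ x ∂μ| ≤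
      μ.real univ ^ (1 - (p₀⁻¹ + p₁⁻¹ + p₂⁻¹ + p₃⁻¹)).toReal *
        ((eLpNorm f₀ p₀ μ).toReal * (eLpNorm f₁ p₁ μ).toReal * (eLpNorm f₂ p₂ μ).toReal *
          (eLpNorm f₃ p₃ μ).toReal) := by
  have h := eLpNorm_one_prod_le (s := Finset.univ) (f := ![f₀, f₁, f₂, f₃])
    (p := ![p₀, p₁, p₂, p₃]) (μ := μ) (by simpa [Fin.sum_univ_four] using hp)
    (by intro i _; fin_cases i <;> simp [hf₀.1, hf₁.1, hf₂.1, hf₃.1])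
  simp only [Fin.prod_univ_four, Fin.sum_univ_four] at h
  have hfin : μ univ ^ (1 - (p₀⁻¹ + p₁⁻¹ + p₂⁻¹ + p₃⁻¹)).toReal *
      (eLpNorm f₀ p₀ μ * eLpNorm f₁ p₁ μ * eLpNorm f₂ p₂ μ * eLpNorm f₃ p₃ μ) ≠ ∞ := by
    finiteness [hf₀.2, hf₁.2, hf₂.2, hf₃.2]
  calc |∫ x, f₀ x * f₁ x * f₂ x * f₃ x ∂μ| = ‖∫ x, f₀ x * f₁ x * f₂ x * f₃ x ∂μ‖ₑ.toReal := by
        simp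
    _ ≤ (eLpNorm (f₀ * f₁ * f₂ * f₃) 1 μ).toReal := by
        refine ENNReal.toReal_mono (h.trans_lt hfin.lt_top).ne ?_
        rw [eLpNorm_one_eq_lintegral_enorm]
        exact enorm_integral_le_lintegral_enorm _
    _ ≤ _ := by
        refine (ENNReal.toReal_mono hfin h).trans_eq ?_
        simp [ENNReal.toReal_rpow, measureReal_def]

theorem abs_integral_mul₄_sub_le {g₁ g₂ g₃ : α → ℝ} (hp : p₀⁻¹ + p₁⁻¹ + p₂⁻¹ + p₃⁻¹ ≤ 1)
    (hf₀ : MemLp f₀ p₀ μ) (hf₁ : MemLp f₁ p₁ μ) (hf₂ : MemLp f₂ p₂ μ) (hf₃ : MemLp f₃ p₃ μ)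
    (hg₁ : MemLp g₁ p₁ μ) (hg₂ : MemLp g₂ p₂ μ) (hg₃ : MemLp g₃ p₃ μ) :
    |∫ x, f₀ x * g₁ x * g₂ x * g₃ x ∂μ - ∫ x, f₀ x * f₁ x * f₂ x * f₃ x ∂μ| ≤
      μ.real univ ^ (1 - (p₀⁻¹ + p₁⁻¹ + p₂⁻¹ + p₃⁻¹)).toReal * (eLpNorm f₀ p₀ μ).toReal *
        ((eLpNorm (fun x => g₁ x - f₁ x) p₁ μ).toReal * (eLpNorm g₂ p₂ μ).toReal *
            (eLpNorm g₃ p₃ μ).toReal +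
          (eLpNorm f₁ p₁ μ).toReal * (eLpNorm (fun x => g₂ x - f₂ x) p₂ μ).toReal *
            (eLpNorm g₃ p₃ μ).toReal +
          (eLpNorm f₁ p₁ μ).toReal * (eLpNorm f₂ p₂ μ).toReal *
            (eLpNorm (fun x => g₃ x - f₃ x) p₃ μ).toReal) := by
  have hd₁ : MemLp (fun x => g₁ x - f₁ x) p₁ μ := hg₁.sub hf₁
  have hd₂ : MemLp (fun x => g₂ x - f₂ x) p₂ μ := hg₂.sub hf₂
  have hd₃ : MemLp (fun x => g₃ x - f₃ x) p₃ μ := hg₃.sub hf₃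
  have telescope : ∫ x, f₀ x * g₁ x * g₂ x * g₃ x ∂μ - ∫ x, f₀ x * f₁ x * f₂ x * f₃ x ∂μ =
      ∫ x, f₀ x * (g₁ x - f₁ x) * g₂ x * g₃ x ∂μ + ∫ x, f₀ x * f₁ x * (g₂ x - f₂ x) * g₃ x ∂μ +
        ∫ x, f₀ x * f₁ x * f₂ x * (g₃ x - f₃ x) ∂μ := by
    have i₁ := integrable_mul₄ hp hf₀ hd₁ hg₂ hg₃
    have i₂ := integrable_mul₄ hp hf₀ hf₁ hd₂ hg₃
    have i₁₂ : Integrable (fun x => f₀ x * (g₁ x - f₁ x) * g₂ x * g₃ x +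
        f₀ x * f₁ x * (g₂ x - f₂ x) * g₃ x) μ := i₁.add i₂
    rw [← integral_sub (integrable_mul₄ hp hf₀ hg₁ hg₂ hg₃) (integrable_mul₄ hp hf₀ hf₁ hf₂ hf₃),
      ← integral_add i₁ i₂, ← integral_add i₁₂ (integrable_mul₄ hp hf₀ hf₁ hf₂ hd₃)]
    congr 1 with x
    ring
  rw [telescope]
  refine (abs_add_three _ _ _).trans ?_
  have e₁ := abs_integral_mul₄_le hp hf₀ hd₁ hg₂ hg₃
  have e₂ := abs_integral_mul₄_le hp hf₀ hf₁ hd₂ hg₃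
  have e₃ := abs_integral_mul₄_le hp hf₀ hf₁ hf₂ hd₃
  linarith

end Holder

theorem eLpNorm_le_modulusLp {p : ℝ≥0∞} {ψ : ℝ → ℝ} {h δ : ℝ} (hh : 0 < h) (hhδ : h ≤ δ) :
    eLpNorm (fun x => ψ (x + h) - ψ x) p (volume.restrict (Ioc (-π) π)) ≤ modulusLp p ψ δ :=
  le_biSup (fun h => eLpNorm (fun x => ψ (x + h) - ψ x) p (volume.restrict (Ioc (-π) π)))
    (show h ∈ Ioc 0 δ from ⟨hh, hhδ⟩)

theorem Function.Periodic.eLpNorm_comp_sub_right_sub_le_modulusLp {p : ℝ≥0∞} {g : ℝ → ℝ}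
    (hg : Periodic g (2 * π)) {t : ℝ} (ht : t ≠ 0) :
    eLpNorm (fun x => g (x - t) - g x) p (volume.restrict (Ioc (-π) π)) ≤ modulusLp p g |t| := by
  rcases ht.lt_or_gt with ht | ht
  · simp_rw [abs_of_neg ht, sub_eq_add_neg]
    exact eLpNorm_le_modulusLp (neg_pos.mpr ht) le_rfl
  · have hD : Periodic (fun y => g (y + t) - g y) (2 * π) := fun y => by
      simp only [add_right_comm y, hg _]
    calc eLpNorm (fun x => g (x - t) - g x) p (volume.restrict (Ioc (-π) π))
        = eLpNorm (fun x => g (x - t + t) - g (x - t)) p (volume.restrict (Ioc (-π) π)) := by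
          rw [← eLpNorm_neg]
          congr 1 with x
          simp
      _ = eLpNorm (fun y => g (y + t) - g y) p (volume.restrict (Ioc (-π) π)) :=
          hD.eLpNorm_comp_sub_right_restrict_Ioc two_pi_pos (by ring) t
      _ ≤ modulusLp p g |t| := by
          rw [abs_of_pos ht]
          exact eLpNorm_le_modulusLp ht le_rfl

theorem MemLip.exists_toReal_eLpNorm_comp_sub_right_sub_le {p : ℝ≥0∞} {γ : ℝ} {g : ℝ → ℝ}
    (hg : MemLip p γ g) (hper : Function.Periodic g (2 * π)) :
    ∃ C, 0 ≤ C ∧ ∀ t : ℝ,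
      (eLpNorm (fun x => g (x - t) - g x) p (volume.restrict (Ioc (-π) π))).toReal ≤
        C * |t| ^ γ := by
  obtain ⟨-, C, hC⟩ := hg
  refine ⟨max C 0, le_max_right _ _, fun t => ?_⟩
  rcases eq_or_ne t 0 with rfl | ht
  · simp only [sub_zero, sub_self, eLpNorm_zero', ENNReal.toReal_zero]
    positivity
  refine ENNReal.toReal_le_of_le_ofReal (by positivity) ?_
  refine (hper.eLpNorm_comp_sub_right_sub_le_modulusLp ht).trans ((hC _ (abs_pos.mpr ht)).trans ?_)
  gcongr
  exact le_max_left _ _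

theorem phi_lipschitz_of_lipschitz_general
    (γ : ℝ) (hγ : γ ∈ Set.Ioc (0 : ℝ) 1)
    (p₀ p₁ p₂ p₃ : ℝ≥0∞)
    (hsum : p₀⁻¹ + p₁⁻¹ + p₂⁻¹ + p₃⁻¹ ≤ 1)
    (h₀ h₁ h₂ h₃ : ℝ → ℝ)
    (hper₁ : Function.Periodic h₁ (2 * Real.pi))
    (hper₂ : Function.Periodic h₂ (2 * Real.pi))
    (hper₃ : Function.Periodic h₃ (2 * Real.pi))
    (hlip₀ : MemLip p₀ γ h₀) (hlip₁ : MemLip p₁ γ h₁)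
    (hlip₂ : MemLip p₂ γ h₂) (hlip₃ : MemLip p₃ γ h₃) :
    ∃ C > (0 : ℝ), ∀ t₁ ∈ Set.Icc (-Real.pi) Real.pi, ∀ t₂ ∈ Set.Icc (-Real.pi) Real.pi,
      ∀ t₃ ∈ Set.Icc (-Real.pi) Real.pi,
      |(∫ u in (-Real.pi)..Real.pi, h₀ u * h₁ (u - t₁) * h₂ (u - t₂) * h₃ (u - t₃)) -
        ∫ u in (-Real.pi)..Real.pi, h₀ u * h₁ u * h₂ u * h₃ u| ≤
      C * (|t₁| + |t₂| + |t₃|) ^ γ := by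
  obtain ⟨C₁, hC₁, hd₁⟩ := hlip₁.exists_toReal_eLpNorm_comp_sub_right_sub_le hper₁
  obtain ⟨C₂, hC₂, hd₂⟩ := hlip₂.exists_toReal_eLpNorm_comp_sub_right_sub_le hper₂
  obtain ⟨C₃, hC₃, hd₃⟩ := hlip₃.exists_toReal_eLpNorm_comp_sub_right_sub_le hper₃
  set μ := volume.restrict (Ioc (-π) π)
  set K := μ.real univ ^ (1 - (p₀⁻¹ + p₁⁻¹ + p₂⁻¹ + p₃⁻¹)).toReal
  set N₀ := (eLpNorm h₀ p₀ μ).toReal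
  set N₁ := (eLpNorm h₁ p₁ μ).toReal
  set N₂ := (eLpNorm h₂ p₂ μ).toReal
  set N₃ := (eLpNorm h₃ p₃ μ).toReal
  set M := K * N₀ * (C₁ * N₂ * N₃ + N₁ * C₂ * N₃ + N₁ * N₂ * C₃)
  have hM : 0 ≤ M := by positivity
  refine ⟨M + 1, by positivity, fun t₁ _ t₂ _ t₃ _ => ?_⟩
  set S := |t₁| + |t₂| + |t₃|
  have hS : ∀ {C t : ℝ}, 0 ≤ C → |t| ≤ S → C * |t| ^ γ ≤ C * S ^ γ := fun hC ht => by
    gcongr; exact hγ.1.le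
  have hπ : π = -π + 2 * π := by ring
  rw [intervalIntegral.integral_of_le (by linarith [pi_pos]),
    intervalIntegral.integral_of_le (by linarith [pi_pos])]
  calc _ ≤ K * N₀ * ((eLpNorm (fun x => h₁ (x - t₁) - h₁ x) p₁ μ).toReal * N₂ * N₃ +
          N₁ * (eLpNorm (fun x => h₂ (x - t₂) - h₂ x) p₂ μ).toReal * N₃ +
          N₁ * N₂ * (eLpNorm (fun x => h₃ (x - t₃) - h₃ x) p₃ μ).toReal) := by
        have := abs_integral_mul₄_sub_le hsum hlip₀.1 hlip₁.1 hlip₂.1 hlip₃.1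
          (hper₁.memLp_comp_sub_right_restrict_Ioc two_pi_pos hπ t₁ hlip₁.1)
          (hper₂.memLp_comp_sub_right_restrict_Ioc two_pi_pos hπ t₂ hlip₂.1)
          (hper₃.memLp_comp_sub_right_restrict_Ioc two_pi_pos hπ t₃ hlip₃.1)
        rwa [hper₂.eLpNorm_comp_sub_right_restrict_Ioc two_pi_pos hπ,
          hper₃.eLpNorm_comp_sub_right_restrict_Ioc two_pi_pos hπ] at this
    _ ≤ K * N₀ * (C₁ * S ^ γ * N₂ * N₃ + N₁ * (C₂ * S ^ γ) * N₃ + N₁ * N₂ * (C₃ * S ^ γ)) := by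
        have := abs_nonneg t₁; have := abs_nonneg t₂; have := abs_nonneg t₃
        gcongr
        exacts [(hd₁ t₁).trans (hS hC₁ (by linarith)), (hd₂ t₂).trans (hS hC₂ (by linarith)),
          (hd₃ t₃).trans (hS hC₃ (by linarith))]
    _ = M * S ^ γ := by ring
    _ ≤ (M + 1) * S ^ γ := by gcongr; linarith

theorem phi_lipschitz_of_lipschitz
    (γ : ℝ) (hγ : γ ∈ Set.Ioc (0 : ℝ) 1)
    (p₀ p₁ p₂ p₃ : ℝ≥0∞) (hp₀ : 1 ≤ p₀) (hp₁ : 1 ≤ p₁) (hp₂ : 1 ≤ p₂) (hp₃ : 1 ≤ p₃)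
    (hsum : p₀⁻¹ + p₁⁻¹ + p₂⁻¹ + p₃⁻¹ ≤ 1)
    (h₀ h₁ h₂ h₃ : ℝ → ℝ)
    (hper₀ : Function.Periodic h₀ (2 * Real.pi))
    (hper₁ : Function.Periodic h₁ (2 * Real.pi))
    (hper₂ : Function.Periodic h₂ (2 * Real.pi))
    (hper₃ : Function.Periodic h₃ (2 * Real.pi))
    (hlip₀ : MemLip p₀ γ h₀) (hlip₁ : MemLip p₁ γ h₁)
    (hlip₂ : MemLip p₂ γ h₂) (hlip₃ : MemLip p₃ γ h₃) :
    ∃ C > (0 : ℝ), ∀ t₁ ∈ Set.Icc (-Real.pi) Real.pi, ∀ t₂ ∈ Set.Icc (-Real.pi) Real.pi,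
      ∀ t₃ ∈ Set.Icc (-Real.pi) Real.pi,
      |(∫ u in (-Real.pi)..Real.pi, h₀ u * h₁ (u - t₁) * h₂ (u - t₂) * h₃ (u - t₃)) -
        ∫ u in (-Real.pi)..Real.pi, h₀ u * h₁ u * h₂ u * h₃ u| ≤
      C * (|t₁| + |t₂| + |t₃|) ^ γ :=
  phi_lipschitz_of_lipschitz_general γ hγ p₀ p₁ p₂ p₃ hsum h₀ h₁ h₂ h₃ hper₁ hper₂ hper₃ hlip₀ hlip₁
    hlip₂ hlip₃
end
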